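/- arXiv:1105.3464 — 7 statements merged into one kernel-verified Lean document; each statement's English description precedes it below -/
import Mathlib

section
/- For all nonnegative integers m, t with 0 ≤ t ≤ m/2 − 1, the following identity holds: Σ_{i=t+1}^{⌊m/2⌋} C(m, 2i)·C(i−1, t) = 2^{m−2t−1} · Σ_{k=0}^{⌊t/2⌋} C(m−3−t−2k, t−2k) + (−1)^{t+1}. -/
open Finset

section Defs

variable {A B : Type*}

/-- The `i`-th variable is essential in `f`. -/
def essentialAt {n : ℕ} (f : (Fin n → A) → B) (i : Fin n) : Prop :=
  ∃ x x' : Fin n → A, (∀ k, k ≠ i → x k = x' k) ∧ f x ≠ f x'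

/-- The essential arity of `f`: the number of its essential variables. -/
noncomputable def essArity {n : ℕ} (f : (Fin n → A) → B) : ℕ :=
  Nat.card {i : Fin n // essentialAt f i}

/-- The identification minor `f_{i ← j}`. -/
def idMinor {n : ℕ} (f : (Fin n → A) → B) (i j : Fin n) : (Fin n → A) → B :=
  fun x => f (Function.update x i (x j))

/-- The arity gap of `f`. -/
noncomputable def arityGap {n : ℕ} (f : (Fin n → A) → B) : ℕ :=
  sInf {d : ℕ | ∃ i j : Fin n, i ≠ j ∧ essentialAt f i ∧ essentialAt f j ∧
    d = essArity f - essArity (idMinor f i j)}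

/-- `oddsupp x` is the set of elements occurring an odd number of times in `x`. -/
def oddsupp {n : ℕ} [DecidableEq A] (x : Fin n → A) : Finset A :=
  (Finset.univ.image x).filter fun a => Odd ((Finset.univ.filter fun j => x j = a).card)

/-- `f` is determined by `oddsupp`. -/
def DeterminedByOddsupp {n : ℕ} [DecidableEq A] (f : (Fin n → A) → B) : Prop :=
  ∃ φ : Finset A → B, ∀ x, f x = φ (oddsupp x)

/-- `oddsuppOn I x = oddsupp (x|_I)`. -/
def oddsuppOn {n : ℕ} [DecidableEq A] (I : Finset (Fin n)) (x : Fin n → A) : Finset A :=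
  (I.image x).filter fun a => Odd ((I.filter fun j => x j = a).card)

/-- `f` is `k`-decomposable: a sum of functions with at most `k` essential variables. -/
def KDecomposable {n : ℕ} [AddCommMonoid B] (k : ℕ) (f : (Fin n → A) → B) : Prop :=
  ∃ (s : ℕ) (g : Fin s → (Fin n → A) → B),
    (∀ i, essArity (g i) ≤ k) ∧ ∀ x, f x = ∑ i, g i x

/-- Partial derivative of `f` with respect to its `i`-th variable with parameter `a`. -/
def pDeriv {n : ℕ} [AddCommGroup B] (f : (Fin n → A) → B) (i : Fin n) (a : A) :
    (Fin n → A) → B :=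
  fun x => f (Function.update x i a) - f x

/-- Higher-order partial derivative `Δ_I^a f`. -/
def pDerivFin {n : ℕ} [AddCommGroup B] (f : (Fin n → A) → B) (I : Finset (Fin n))
    (a : Fin n → A) : (Fin n → A) → B :=
  (I.sort (· ≤ ·)).foldr (fun i g => pDeriv g i (a i)) f

/-- `updateOn x J a` is the tuple `x_J^a`. -/
def updateOn {n : ℕ} (x : Fin n → A) (J : Finset (Fin n)) (a : Fin n → A) : Fin n → A :=
  fun k => if k ∈ J then a k else x k

/-- `g` is a simple minor of `f`. -/
def IsSimpleMinor {n m : ℕ} (g : (Fin m → A) → B) (f : (Fin n → A) → B) : Prop :=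
  ∃ σ : Fin n → Fin m, ∀ x : Fin m → A, g x = f (x ∘ σ)

/-- `f` and `g` are equivalent: each is a simple minor of the other. -/
def FnEquiv {n m : ℕ} (f : (Fin n → A) → B) (g : (Fin m → A) → B) : Prop :=
  IsSimpleMinor g f ∧ IsSimpleMinor f g

end Defs

private lemma sw_tele (H : ℕ → ℤ) (a : ℕ) : ∀ N, a ≤ N →
    (∑ i ∈ Icc (a+1) N, (H (i-1) - H i)) = H a - H N := by
  intro N
  induction N with
  | zero => intro h; interval_cases a; simp
  | succ n ih =>
    intro h
    rcases Nat.lt_or_ge a (n+1) with h' | h'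
    · rw [Finset.sum_Icc_succ_top (by omega), ih (by omega)]
      have e : n + 1 - 1 = n := by omega
      rw [e]; ring
    · have : a = n + 1 := by omega
      subst this; simp

private lemma sw_sum_alt (n N : ℕ) (h : n ≤ N) :
    (∑ r ∈ range (N+1), (-1:ℤ)^r * (n.choose r)) = if n = 0 then 1 else 0 := by
  rw [← Int.alternating_sum_range_choose (n := n)]
  refine (Finset.sum_subset (Finset.range_subset_range.2 (by omega)) ?_).symm
  intro x _ hx
  simp only [Finset.mem_range, not_lt] at hx
  rw [Nat.choose_eq_zero_of_lt (by omega)]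
  simp

private lemma sw_t0 (m : ℕ) (h2 : 2 ≤ m) :
    (∑ i ∈ Icc 1 (m/2), ((m.choose (2*i)) : ℤ)) = 2^(m-1) - 1 := by
  induction m, h2 using Nat.le_induction with
  | base => decide
  | succ m hm ih =>
    set N := (m+1)/2 with hN
    set H : ℕ → ℤ := fun j => ∑ r ∈ range (2*j+1), (-1:ℤ)^r * (m.choose r) with hH
    have ext : (∑ i ∈ Icc 1 (m/2), ((m.choose (2*i)) : ℤ)) = ∑ i ∈ Icc 1 N, ((m.choose (2*i)) : ℤ) := by
      apply Finset.sum_subset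
      · apply Finset.Icc_subset_Icc_right; omega
      · intro x hx hx'
        simp only [Finset.mem_Icc] at hx hx'
        rw [Nat.choose_eq_zero_of_lt (by omega)]
        simp
    have key : ∀ i ∈ Icc 1 N, ((m+1).choose (2*i) : ℤ) - 2 * (m.choose (2*i)) = H (i-1) - H i := by
      intro i hi
      simp only [Finset.mem_Icc] at hi
      obtain ⟨j, rfl⟩ : ∃ j, i = j + 1 := ⟨i - 1, by omega⟩
      have hs : H (j+1) = H j - ((m.choose (2*j+1) : ℤ)) + (m.choose (2*j+1+1)) := by
        simp only [hH]
        have e2 : 2*(j+1)+1 = (2*j+1)+1+1 := by ring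
        rw [e2, Finset.sum_range_succ, Finset.sum_range_succ]
        have o1 : (-1:ℤ)^(2*j+1) = -1 := by
          rw [pow_succ, pow_mul]; norm_num
        have o2 : (-1:ℤ)^(2*j+1+1) = 1 := by
          rw [pow_succ, o1]; norm_num
        rw [o1, o2]
        ring
      have e1 : 2*(j+1) = (2*j+1)+1 := by ring
      have pas : ((m+1).choose (2*(j+1)) : ℤ) = m.choose (2*j+1) + m.choose (2*j+1+1) := by
        rw [e1, Nat.choose_succ_succ]; push_cast; ring
      have e3 : j + 1 - 1 = j := by omega
      rw [e3, pas, hs]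
      have e4 : 2*(j+1) = 2*j+1+1 := by ring
      rw [e4]
      ring
    have tsum : (∑ i ∈ Icc 1 N, (((m+1).choose (2*i) : ℤ) - 2 * (m.choose (2*i)))) = H 0 - H N := by
      rw [Finset.sum_congr rfl key]
      exact sw_tele H 0 N (by omega)
    have h0 : H 0 = 1 := by simp [hH]
    have hNval : H N = 0 := by
      have h' := sw_sum_alt m (2*N) (by omega)
      rw [if_neg (by omega : m ≠ 0)] at h'
      exact h'
    have expand : (∑ i ∈ Icc 1 N, ((m+1).choose (2*i) : ℤ))
        = (∑ i ∈ Icc 1 N, (((m+1).choose (2*i) : ℤ) - 2 * (m.choose (2*i))))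
          + 2 * ∑ i ∈ Icc 1 N, ((m.choose (2*i)) : ℤ) := by
      rw [Finset.mul_sum, ← Finset.sum_add_distrib]
      apply Finset.sum_congr rfl
      intro x _; ring
    rw [expand, tsum, h0, hNval, ← ext, ih]
    have e5 : m + 1 - 1 = (m - 1) + 1 := by omega
    rw [e5, pow_succ]
    ring

private lemma sw_pasc (n r : ℕ) (hn : 1 ≤ n) (hr : 1 ≤ r) :
    ((n.choose r : ℤ)) = (n-1).choose r + (n-1).choose (r-1) := by
  obtain ⟨a, rfl⟩ : ∃ a, n = a + 1 := ⟨n - 1, by omega⟩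
  obtain ⟨b, rfl⟩ : ∃ b, r = b + 1 := ⟨r - 1, by omega⟩
  simp only [Nat.add_sub_cancel, Nat.choose_succ_succ]
  push_cast; ring

private lemma sw_baseA (t : ℕ) (ht : 1 ≤ t) :
    (∑ i ∈ Finset.Icc (t + 1) ((2*t+2) / 2),
        (Nat.choose (2*t+2) (2 * i) * Nat.choose (i - 1) t : ℤ)) =
      2 ^ (2*t+2 - 2 * t - 1) *
        (∑ k ∈ Finset.range (t / 2 + 1),
          (Nat.choose (2*t+2 - 3 - t - 2 * k) (t - 2 * k) : ℤ)) +
      (-1) ^ (t + 1) := by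
  rw [show (2*t+2)/2 = t+1 by omega, Finset.Icc_self, Finset.sum_singleton,
    show 2*(t+1) = 2*t+2 by ring, Nat.choose_self, show t+1-1 = t by omega,
    Nat.choose_self, show 2*t+2-2*t-1 = 1 by omega]
  rcases Nat.even_or_odd t with ⟨s, rfl⟩ | ⟨s, rfl⟩
  · rw [show (s+s)/2+1 = s+1 by omega, Finset.sum_range_succ]
    rw [Finset.sum_eq_zero (fun k hk => by
      simp only [Finset.mem_range] at hk
      rw [Nat.choose_eq_zero_of_lt (by omega)]
      norm_num)]
    rw [show 2*(s+s)+2-3-(s+s)-2*s = 0 by omega, show (s+s)-2*s = 0 by omega,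
      Nat.choose_self]
    have hp : (-1:ℤ)^(s+s+1) = -1 := by
      rw [pow_succ, Even.neg_one_pow ⟨s, rfl⟩]; norm_num
    rw [hp]; norm_num
  · rw [show (2*s+1)/2+1 = s+1 by omega]
    rw [Finset.sum_eq_zero (fun k hk => by
      simp only [Finset.mem_range] at hk
      rw [Nat.choose_eq_zero_of_lt (by omega)]
      norm_num)]
    have hp : (-1:ℤ)^(2*s+1+1) = 1 := Even.neg_one_pow ⟨s+1, by ring⟩
    rw [hp]; norm_num

private lemma sw_baseB (t : ℕ) (ht : 1 ≤ t) :
    (∑ i ∈ Finset.Icc (t + 1) ((2*t+3) / 2),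
        (Nat.choose (2*t+3) (2 * i) * Nat.choose (i - 1) t : ℤ)) =
      2 ^ (2*t+3 - 2 * t - 1) *
        (∑ k ∈ Finset.range (t / 2 + 1),
          (Nat.choose (2*t+3 - 3 - t - 2 * k) (t - 2 * k) : ℤ)) +
      (-1) ^ (t + 1) := by
  rw [show (2*t+3)/2 = t+1 by omega, Finset.Icc_self, Finset.sum_singleton,
    show 2*(t+1) = 2*t+2 by ring, show t+1-1 = t by omega,
    Nat.choose_self, show 2*t+3-2*t-1 = 2 by omega]
  have hc : (2*t+3).choose (2*t+2) = 2*t+3 := by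
    rw [show 2*t+2 = (2*t+3)-1 by omega, Nat.choose_symm (by omega),
      Nat.choose_one_right]
  rw [hc]
  have hone : ∀ k ∈ Finset.range (t/2+1), ((2*t+3-3-t-2*k).choose (t-2*k) : ℤ) = 1 := by
    intro k hk
    rw [show 2*t+3-3-t-2*k = t-2*k by omega, Nat.choose_self]
    norm_num
  rw [Finset.sum_congr rfl hone, Finset.sum_const, Finset.card_range]
  rcases Nat.even_or_odd t with ⟨s, rfl⟩ | ⟨s, rfl⟩
  · have hp : (-1:ℤ)^(s+s+1) = -1 := by
      rw [pow_succ, Even.neg_one_pow ⟨s, rfl⟩]; norm_num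
    rw [hp, show (s+s)/2 = s by omega]
    push_cast; ring
  · have hp : (-1:ℤ)^(2*s+1+1) = 1 := Even.neg_one_pow ⟨s+1, by ring⟩
    rw [hp, show (2*s+1)/2 = s by omega]
    push_cast; ring

private lemma sw_rsum (M t' : ℕ) (h : 2*t'+6 ≤ M+2) :
    (∑ k ∈ range ((t'+1)/2+1), ((M+2-3-(t'+1)-2*k).choose ((t'+1)-2*k) : ℤ))
    = (∑ k ∈ range ((t'+1)/2+1), ((M+1-3-(t'+1)-2*k).choose ((t'+1)-2*k) : ℤ))
    + (∑ k ∈ range (t'/2+1), ((M-3-t'-2*k).choose (t'-2*k) : ℤ)) := by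
  rcases Nat.even_or_odd t' with ⟨s, rfl⟩ | ⟨s, rfl⟩
  · rw [show (s+s+1)/2+1 = s+1 by omega, show (s+s)/2+1 = s+1 by omega,
      ← Finset.sum_add_distrib]
    apply Finset.sum_congr rfl
    intro k hk
    simp only [Finset.mem_range] at hk
    rw [show M+1-3-(s+s+1)-2*k = M+2-3-(s+s+1)-2*k-1 by omega,
      show M-3-(s+s)-2*k = M+2-3-(s+s+1)-2*k-1 by omega,
      show (s+s)-2*k = (s+s+1)-2*k-1 by omega]
    exact sw_pasc _ _ (by omega) (by omega)
  · rw [show (2*s+1+1)/2+1 = (s+1)+1 by omega, show (2*s+1)/2+1 = s+1 by omega,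
      Finset.sum_range_succ,
      Finset.sum_range_succ (fun k => ((M+1-3-(2*s+1+1)-2*k).choose ((2*s+1+1)-2*k) : ℤ))]
    have h1 : ((M+2-3-(2*s+1+1)-2*(s+1)).choose ((2*s+1+1)-2*(s+1)) : ℤ) = 1 := by
      rw [show (2*s+1+1)-2*(s+1) = 0 by omega, Nat.choose_zero_right]; norm_num
    have h2 : ((M+1-3-(2*s+1+1)-2*(s+1)).choose ((2*s+1+1)-2*(s+1)) : ℤ) = 1 := by
      rw [show (2*s+1+1)-2*(s+1) = 0 by omega, Nat.choose_zero_right]; norm_num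
    have h3 : (∑ k ∈ range (s+1), ((M+2-3-(2*s+1+1)-2*k).choose ((2*s+1+1)-2*k) : ℤ))
        = (∑ k ∈ range (s+1), (((M+1-3-(2*s+1+1)-2*k).choose ((2*s+1+1)-2*k) : ℤ)
            + ((M-3-(2*s+1)-2*k).choose ((2*s+1)-2*k) : ℤ))) := by
      apply Finset.sum_congr rfl
      intro k hk
      simp only [Finset.mem_range] at hk
      rw [show M+1-3-(2*s+1+1)-2*k = M+2-3-(2*s+1+1)-2*k-1 by omega,
        show M-3-(2*s+1)-2*k = M+2-3-(2*s+1+1)-2*k-1 by omega,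
        show (2*s+1)-2*k = (2*s+1+1)-2*k-1 by omega]
      exact sw_pasc _ _ (by omega) (by omega)
    rw [h1, h2, h3, Finset.sum_add_distrib]
    ring

private lemma sw_lrec (M t' : ℕ) (h : 2*t'+6 ≤ M+2) :
    (∑ i ∈ Icc (t'+1+1) ((M+2)/2), (((M+2).choose (2*i)) * ((i-1).choose (t'+1)) : ℤ))
    = 2 * (∑ i ∈ Icc (t'+1+1) ((M+1)/2), (((M+1).choose (2*i)) * ((i-1).choose (t'+1)) : ℤ))
    + (∑ i ∈ Icc (t'+1) (M/2), ((M.choose (2*i)) * ((i-1).choose t') : ℤ)) := by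
  set N := (M+2)/2 with hN
  set Hf : ℕ → ℤ := fun j => (M.choose (2*j) : ℤ) * (j.choose (t'+1)) with hHf
  have ext1 : (∑ i ∈ Icc (t'+1+1) ((M+1)/2), (((M+1).choose (2*i)) * ((i-1).choose (t'+1)) : ℤ))
      = ∑ i ∈ Icc (t'+1+1) N, (((M+1).choose (2*i)) * ((i-1).choose (t'+1)) : ℤ) := by
    apply Finset.sum_subset (Finset.Icc_subset_Icc_right (by omega))
    intro x hx hx'
    simp only [Finset.mem_Icc] at hx hx'
    rw [Nat.choose_eq_zero_of_lt (show M+1 < 2*x by omega)]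
    norm_num
  have ext2 : (∑ i ∈ Icc (t'+1) (M/2), ((M.choose (2*i)) * ((i-1).choose t') : ℤ))
      = (M.choose (2*(t'+1)) : ℤ)
        + ∑ i ∈ Icc (t'+1+1) N, ((M.choose (2*i)) * ((i-1).choose t') : ℤ) := by
    rw [← Finset.Ioc_insert_left (show t'+1 ≤ M/2 by omega),
      Finset.sum_insert Finset.left_notMem_Ioc, ← Finset.Icc_add_one_left_eq_Ioc]
    congr 1
    · rw [show t'+1-1 = t' by omega, Nat.choose_self]; push_cast; ring
    · apply Finset.sum_subset (Finset.Icc_subset_Icc_right (by omega))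
      intro x hx hx'
      simp only [Finset.mem_Icc, Nat.succ_eq_add_one] at hx hx'
      rw [Nat.choose_eq_zero_of_lt (show M < 2*x by omega)]
      norm_num
  have key : ∀ i ∈ Icc (t'+1+1) N,
      (((M+2).choose (2*i)) * ((i-1).choose (t'+1)) : ℤ)
        - 2 * (((M+1).choose (2*i)) * ((i-1).choose (t'+1)))
        - ((M.choose (2*i)) * ((i-1).choose t'))
      = Hf (i-1) - Hf i := by
    intro i hi
    simp only [Finset.mem_Icc] at hi
    obtain ⟨j, rfl⟩ : ∃ j, i = j + 1 := ⟨i - 1, by omega⟩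
    simp only [Nat.add_sub_cancel, hHf]
    have c1 : ((M+2).choose (2*(j+1)) : ℤ)
        = (M+1).choose (2*j+1) + (M+1).choose (2*j+1+1) := by
      rw [show 2*(j+1) = (2*j+1)+1 by ring]
      exact_mod_cast Nat.choose_succ_succ (M+1) (2*j+1)
    have c2 : ((M+1).choose (2*j+1) : ℤ) = M.choose (2*j) + M.choose (2*j+1) := by
      exact_mod_cast Nat.choose_succ_succ M (2*j)
    have c3 : ((M+1).choose (2*j+1+1) : ℤ) = M.choose (2*j+1) + M.choose (2*j+1+1) := by
      exact_mod_cast Nat.choose_succ_succ M (2*j+1)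
    have c4 : ((j+1).choose (t'+1) : ℤ) = j.choose t' + j.choose (t'+1) := by
      exact_mod_cast Nat.choose_succ_succ j t'
    rw [show 2*(j+1) = 2*j+1+1 by ring] at c1 ⊢
    rw [c1, c3, c2, c4]
    ring
  have tel : (∑ i ∈ Icc (t'+1+1) N,
      ((((M+2).choose (2*i)) * ((i-1).choose (t'+1)) : ℤ)
        - 2 * (((M+1).choose (2*i)) * ((i-1).choose (t'+1)))
        - ((M.choose (2*i)) * ((i-1).choose t'))))
      = Hf (t'+1) - Hf N := by
    rw [Finset.sum_congr rfl key]
    exact sw_tele Hf (t'+1) N (by omega)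
  have hHN : Hf N = 0 := by
    simp only [hHf]
    rw [Nat.choose_eq_zero_of_lt (show M < 2*N by omega)]
    norm_num
  have hHt : Hf (t'+1) = (M.choose (2*(t'+1)) : ℤ) := by
    simp only [hHf, Nat.choose_self]; ring
  have expand : (∑ i ∈ Icc (t'+1+1) N,
      ((((M+2).choose (2*i)) * ((i-1).choose (t'+1)) : ℤ)
        - 2 * (((M+1).choose (2*i)) * ((i-1).choose (t'+1)))
        - ((M.choose (2*i)) * ((i-1).choose t'))))
      = (∑ i ∈ Icc (t'+1+1) N, (((M+2).choose (2*i)) * ((i-1).choose (t'+1)) : ℤ))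
        - 2 * (∑ i ∈ Icc (t'+1+1) N, (((M+1).choose (2*i)) * ((i-1).choose (t'+1)) : ℤ))
        - (∑ i ∈ Icc (t'+1+1) N, ((M.choose (2*i)) * ((i-1).choose t') : ℤ)) := by
    rw [Finset.sum_sub_distrib, Finset.sum_sub_distrib, Finset.mul_sum]
  rw [ext1, ext2]
  rw [expand, hHt, hHN] at tel
  linarith [tel]


theorem binomial_identity_shattuck_waldhauser (m t : ℕ) (h : 2 * t + 2 ≤ m) :
    (∑ i ∈ Finset.Icc (t + 1) (m / 2),
        (Nat.choose m (2 * i) * Nat.choose (i - 1) t : ℤ)) =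
      2 ^ (m - 2 * t - 1) *
        (∑ k ∈ Finset.range (t / 2 + 1),
          (Nat.choose (m - 3 - t - 2 * k) (t - 2 * k) : ℤ)) +
      (-1) ^ (t + 1) := by
  induction m using Nat.strong_induction_on generalizing t with
  | _ m ih =>
    rcases Nat.eq_zero_or_pos t with rfl | ht
    · have hr : (∑ k ∈ Finset.range (0/2+1), ((m-3-0-2*k).choose (0-2*k) : ℤ)) = 1 := by
        rw [show (0:ℕ)/2+1 = 1 by norm_num, Finset.sum_range_one,
          show (0:ℕ)-2*0 = 0 by norm_num, Nat.choose_zero_right]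
        norm_num
      have hl : (∑ i ∈ Finset.Icc (0+1) (m/2), ((m.choose (2*i)) * ((i-1).choose 0) : ℤ))
          = ∑ i ∈ Finset.Icc 1 (m/2), ((m.choose (2*i)) : ℤ) := by
        rw [show (0:ℕ)+1 = 1 by norm_num]
        apply Finset.sum_congr rfl
        intro i _
        rw [Nat.choose_zero_right]
        push_cast; ring
      rw [hl, hr, sw_t0 m (by omega), show m-2*0-1 = m-1 by omega]
      ring
    · obtain ⟨t', rfl⟩ : ∃ t', t = t'+1 := ⟨t-1, by omega⟩
      rcases (by omega : m = 2*(t'+1)+2 ∨ m = 2*(t'+1)+3 ∨ 2*(t'+1)+4 ≤ m) with rfl | rfl | hm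
      · exact sw_baseA (t'+1) (by omega)
      · exact sw_baseB (t'+1) (by omega)
      · obtain ⟨M, rfl⟩ : ∃ M, m = M+2 := ⟨m-2, by omega⟩
        have IH1 := ih (M+1) (by omega) (t'+1) (by omega)
        have IH2 := ih M (by omega) t' (by omega)
        have L := sw_lrec M t' (by omega)
        have R := sw_rsum M t' (by omega)
        rw [L, IH1, IH2, R,
          show M+2-2*(t'+1)-1 = (M-2*t'-2)+1 by omega,
          show M+1-2*(t'+1)-1 = M-2*t'-2 by omega,
          show M-2*t'-1 = (M-2*t'-2)+1 by omega]
        ring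
end

section
/- Let A be a set with a distinguished element 0 and (B, +) an abelian group. A function f : A^n → B is k-decomposable if and only if Δ_I^a f(0,…,0) = 0 for every a ∈ A^n and every subset I ⊆ [n] with |I| > k. -/
open Finset

section Aux
variable {A B : Type*} [AddCommGroup B] {n : ℕ}

lemma updateOn_empty (x a : Fin n → A) : updateOn x ∅ a = x := by
  funext k; simp [updateOn]

lemma updateOn_univ (x a : Fin n → A) : updateOn x Finset.univ a = a := by
  funext k; simp [updateOn]

lemma updateOn_insert_of_not_mem {J : Finset (Fin n)} {i : Fin n} (hi : i ∉ J)
    (x a : Fin n → A) :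
    updateOn x (insert i J) a = updateOn (Function.update x i (a i)) J a := by
  funext k
  by_cases hk : k ∈ J
  · simp [updateOn, hk, Finset.mem_insert]
  · by_cases hki : k = i
    · subst hki; simp [updateOn, hk, hi]
    · simp [updateOn, hk, hki, Function.update_of_ne hki]

lemma updateOn_insert (J : Finset (Fin n)) (i : Fin n) (x a : Fin n → A) :
    updateOn x (insert i J) a = Function.update (updateOn x J a) i (a i) := by
  funext k
  by_cases hki : k = i
  · subst hki; simp [updateOn]
  · by_cases hk : k ∈ J <;>
      simp [updateOn, hk, hki, Function.update_of_ne hki, Finset.mem_insert]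

lemma listDeriv_eq_sum (f : (Fin n → A) → B) (a : Fin n → A) (l : List (Fin n)) :
    l.Nodup → ∀ x,
    l.foldr (fun i g => pDeriv g i (a i)) f x
      = ∑ J ∈ l.toFinset.powerset,
          (-1 : ℤ) ^ (l.toFinset.card + J.card) • f (updateOn x J a) := by
  induction l with
  | nil => intro _ x; simp [updateOn_empty]
  | cons i t ih =>
    intro hl x
    obtain ⟨hit, ht⟩ := List.nodup_cons.mp hl
    have hiT : i ∉ t.toFinset := by simpa using hit
    have hfold : (i :: t).foldr (fun j g => pDeriv g j (a j)) f x
        = t.foldr (fun j g => pDeriv g j (a j)) f (Function.update x i (a i))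
          - t.foldr (fun j g => pDeriv g j (a j)) f x := rfl
    rw [hfold, ih ht, ih ht, List.toFinset_cons,
      Finset.sum_powerset_insert hiT, Finset.card_insert_of_notMem hiT]
    have h1 : ∑ J ∈ t.toFinset.powerset,
        (-1 : ℤ) ^ (t.toFinset.card + 1 + J.card) • f (updateOn x J a)
        = - ∑ J ∈ t.toFinset.powerset,
            (-1 : ℤ) ^ (t.toFinset.card + J.card) • f (updateOn x J a) := by
      rw [← Finset.sum_neg_distrib]
      refine Finset.sum_congr rfl fun J _ => ?_
      have he : t.toFinset.card + 1 + J.card = (t.toFinset.card + J.card) + 1 := by omega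
      rw [he, pow_succ, mul_neg_one, neg_smul]
    have h2 : ∑ J ∈ t.toFinset.powerset,
        (-1 : ℤ) ^ (t.toFinset.card + 1 + (insert i J).card) • f (updateOn x (insert i J) a)
        = ∑ J ∈ t.toFinset.powerset,
            (-1 : ℤ) ^ (t.toFinset.card + J.card) •
              f (updateOn (Function.update x i (a i)) J a) := by
      refine Finset.sum_congr rfl fun J hJ => ?_
      have hiJ : i ∉ J := fun h => hiT (Finset.mem_powerset.mp hJ h)
      rw [Finset.card_insert_of_notMem hiJ, updateOn_insert_of_not_mem hiJ]
      have he : t.toFinset.card + 1 + (J.card + 1) = (t.toFinset.card + J.card) + 2 := by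
        omega
      rw [he, pow_add]
      norm_num
    rw [h1, h2]
    abel

lemma pDerivFin_eq_sum (f : (Fin n → A) → B) (I : Finset (Fin n)) (a x : Fin n → A) :
    pDerivFin f I a x
      = ∑ J ∈ I.powerset, (-1 : ℤ) ^ (I.card + J.card) • f (updateOn x J a) := by
  have := listDeriv_eq_sum f a (I.sort (· ≤ ·)) (I.sort_nodup (· ≤ ·)) x
  simpa [pDerivFin, Finset.sort_toFinset] using this

lemma pDerivFin_eq_zero_of_invariant (g : (Fin n → A) → B) (I : Finset (Fin n))
    (a x : Fin n → A) (i : Fin n) (hi : i ∈ I)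
    (hg : ∀ (y : Fin n → A) (b : A), g (Function.update y i b) = g y) :
    pDerivFin g I a x = 0 := by
  rw [pDerivFin_eq_sum]
  have hins : I = insert i (I.erase i) := (Finset.insert_erase hi).symm
  rw [hins, Finset.sum_powerset_insert (Finset.notMem_erase i I), ← Finset.sum_add_distrib]
  refine Finset.sum_eq_zero fun J hJ => ?_
  have hiJ : i ∉ J := fun h => Finset.notMem_erase i I (Finset.mem_powerset.mp hJ h)
  rw [Finset.card_insert_of_notMem hiJ, updateOn_insert, hg]
  have he : (insert i (I.erase i)).card + (J.card + 1)
      = ((insert i (I.erase i)).card + J.card) + 1 := by omega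
  rw [he, pow_succ, mul_neg_one, neg_smul, add_neg_cancel]

lemma mobius (f : (Fin n → A) → B) (x : Fin n → A) (I : Finset (Fin n)) :
    ∀ b : Fin n → A,
    (∑ J ∈ I.powerset, ∑ K ∈ J.powerset,
        (-1 : ℤ) ^ (J.card + K.card) • f (updateOn b K x))
      = f (updateOn b I x) := by
  induction I using Finset.induction_on with
  | empty => intro b; simp [updateOn_empty]
  | @insert i I hiI ih =>
    intro b
    rw [Finset.sum_powerset_insert hiI]
    have h2 : ∀ J ∈ I.powerset,
        (∑ K ∈ (insert i J).powerset,
          (-1 : ℤ) ^ ((insert i J).card + K.card) • f (updateOn b K x))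
        = (- ∑ K ∈ J.powerset, (-1 : ℤ) ^ (J.card + K.card) • f (updateOn b K x))
          + ∑ K ∈ J.powerset, (-1 : ℤ) ^ (J.card + K.card) •
              f (updateOn (Function.update b i (x i)) K x) := by
      intro J hJ
      have hiJ : i ∉ J := fun h => hiI (Finset.mem_powerset.mp hJ h)
      rw [Finset.sum_powerset_insert hiJ, Finset.card_insert_of_notMem hiJ]
      congr 1
      · rw [← Finset.sum_neg_distrib]
        refine Finset.sum_congr rfl fun K _ => ?_
        have he : J.card + 1 + K.card = (J.card + K.card) + 1 := by omega
        rw [he, pow_succ, mul_neg_one, neg_smul]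
      · refine Finset.sum_congr rfl fun K hK => ?_
        have hiK : i ∉ K := fun h => hiJ (Finset.mem_powerset.mp hK h)
        rw [Finset.card_insert_of_notMem hiK, updateOn_insert_of_not_mem hiK]
        have he : J.card + 1 + (K.card + 1) = (J.card + K.card) + 2 := by omega
        rw [he, pow_add]
        norm_num
    rw [Finset.sum_congr rfl h2, Finset.sum_add_distrib, Finset.sum_neg_distrib]
    have := ih (Function.update b i (x i))
    rw [this, ← updateOn_insert_of_not_mem hiI]
    abel

omit [AddCommGroup B] in
lemma essentialAt_mem_of_depends {g : (Fin n → A) → B} {J : Finset (Fin n)}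
    (h : ∀ x y : Fin n → A, (∀ j ∈ J, x j = y j) → g x = g y) {i : Fin n}
    (hi : essentialAt g i) : i ∈ J := by
  by_contra hiJ
  obtain ⟨x, x', hagree, hne⟩ := hi
  exact hne (h x x' fun j hj => hagree j (fun e => hiJ (e ▸ hj)))

omit [AddCommGroup B] in
lemma essArity_le_of_depends (g : (Fin n → A) → B) (J : Finset (Fin n))
    (h : ∀ x y : Fin n → A, (∀ j ∈ J, x j = y j) → g x = g y) :
    essArity g ≤ J.card := by
  have hle : Nat.card {i : Fin n // essentialAt g i} ≤ Nat.card {i : Fin n // i ∈ J} := by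
    refine Nat.card_le_card_of_injective
      (fun p => (⟨p.1, essentialAt_mem_of_depends h p.2⟩ : {i : Fin n // i ∈ J})) ?_
    intro p q hpq
    have := congrArg Subtype.val hpq
    exact Subtype.ext this
  have : Nat.card {i : Fin n // i ∈ J} = J.card := Nat.card_eq_finsetCard J
  rw [essArity]
  omega

omit [AddCommGroup B] in
lemma exists_invariant {k : ℕ} (g : (Fin n → A) → B) (hk : essArity g ≤ k)
    (I : Finset (Fin n)) (hI : k < I.card) :
    ∃ i ∈ I, ∀ (y : Fin n → A) (b : A), g (Function.update y i b) = g y := by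
  by_contra hc
  push_neg at hc
  have hall : ∀ i ∈ I, essentialAt g i := by
    intro i hi
    obtain ⟨y, b, hne⟩ := hc i hi
    exact ⟨Function.update y i b, y, fun m hm => Function.update_of_ne hm _ _, hne⟩
  have hle : Nat.card {i : Fin n // i ∈ I} ≤ Nat.card {i : Fin n // essentialAt g i} := by
    refine Nat.card_le_card_of_injective
      (fun p => (⟨p.1, hall p.1 p.2⟩ : {i : Fin n // essentialAt g i})) ?_
    intro p q hpq
    have := congrArg Subtype.val hpq
    exact Subtype.ext this
  have hcard : Nat.card {i : Fin n // i ∈ I} = I.card := Nat.card_eq_finsetCard I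
  rw [essArity] at hk
  omega

end Aux

theorem kDecomposable_iff_derivatives_vanish {A B : Type*} [Zero A] [AddCommGroup B]
    {n : ℕ} (k : ℕ) (f : (Fin n → A) → B) :
    KDecomposable k f ↔
      ∀ (a : Fin n → A) (I : Finset (Fin n)), k < I.card →
        pDerivFin f I a (fun _ => (0 : A)) = 0 := by
  classical
  constructor
  · rintro ⟨s, g, hess, hsum⟩ a I hI
    set z : Fin n → A := fun _ => 0 with hz
    rw [pDerivFin_eq_sum]
    have hterm : ∀ J ∈ I.powerset, (-1 : ℤ) ^ (I.card + J.card) • f (updateOn z J a)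
        = ∑ i, (-1 : ℤ) ^ (I.card + J.card) • g i (updateOn z J a) := by
      intro J _
      rw [hsum, Finset.smul_sum]
    rw [Finset.sum_congr rfl hterm, Finset.sum_comm]
    refine Finset.sum_eq_zero fun i _ => ?_
    obtain ⟨j, hjI, hinv⟩ := exists_invariant (g i) (hess i) I hI
    rw [← pDerivFin_eq_sum]
    exact pDerivFin_eq_zero_of_invariant (g i) I a z j hjI hinv
  · intro h
    set z : Fin n → A := fun _ => 0 with hz
    set S : Finset (Finset (Fin n)) := (Finset.univ : Finset (Fin n)).powerset with hS
    set G : Finset (Fin n) → (Fin n → A) → B :=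
      fun J x => if J.card ≤ k then pDerivFin f J x z else 0 with hG
    refine ⟨S.card, fun i => G (S.equivFin.symm i), ?_, ?_⟩
    · intro i
      set J : Finset (Fin n) := (S.equivFin.symm i : Finset (Fin n)) with hJ
      by_cases hJk : J.card ≤ k
      · refine le_trans (essArity_le_of_depends _ J ?_) hJk
        intro x y hxy
        simp only [hG, ← hJ, if_pos hJk]
        rw [pDerivFin_eq_sum, pDerivFin_eq_sum]
        refine Finset.sum_congr rfl fun K hK => ?_
        have harg : updateOn z K x = updateOn z K y := by
          funext m
          simp only [updateOn]
          split
          · exact hxy m (Finset.mem_powerset.mp hK ‹_›)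
          · rfl
        rw [harg]
      · refine le_trans (essArity_le_of_depends _ ∅ ?_) (Nat.zero_le k)
        intro x y _
        simp only [hG, ← hJ, if_neg hJk]
    · intro x
      have e1 : (∑ i : Fin S.card, G (S.equivFin.symm i) x) = ∑ J ∈ S, G J x := by
        rw [← Finset.sum_coe_sort S (fun J => G J x)]
        exact (Fintype.sum_equiv S.equivFin (fun J => G (↑J) x)
          (fun i => G (S.equivFin.symm i) x) (fun J => by simp)).symm
      have e2 : ∀ J ∈ S, G J x = pDerivFin f J x z := by
        intro J _
        by_cases hc : J.card ≤ k
        · simp only [hG, if_pos hc]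
        · simp only [hG, if_neg hc]
          exact (h x J (by omega)).symm
      have e3 : ∀ J ∈ S, pDerivFin f J x z
          = ∑ K ∈ J.powerset, (-1 : ℤ) ^ (J.card + K.card) • f (updateOn z K x) :=
        fun J _ => pDerivFin_eq_sum f J x z
      rw [e1, Finset.sum_congr rfl e2, Finset.sum_congr rfl e3, hS,
        mobius f x Finset.univ z, updateOn_univ]
end

section
/- If A is a finite set and B is an abelian group of exponent 2^e, then every function f : A^n → B determined by oddsupp is (|A| + e − 2)-decomposable. -/
open Finset

set_option linter.unusedSectionVars false

section Aux

open Finset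

variable {A B : Type*} [DecidableEq A] [AddCommGroup B] {n : ℕ}

lemma aux_essArity_le_junta (J : Finset (Fin n)) (g : (Fin n → A) → B)
    (h : ∀ x x' : Fin n → A, (∀ j ∈ J, x j = x' j) → g x = g x') :
    essArity g ≤ J.card := by
  have hess : ∀ i : Fin n, essentialAt g i → i ∈ J := by
    intro i hi
    by_contra hiJ
    obtain ⟨x, x', hxx, hgg⟩ := hi
    exact hgg (h x x' fun j hj => hxx j fun e => hiJ (e ▸ hj))
  have hinj : Function.Injective (fun i : {i : Fin n // essentialAt g i} =>
      (⟨i.1, hess i.1 i.2⟩ : {j : Fin n // j ∈ J})) := by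
    intro a b hab
    simp only [Subtype.mk.injEq] at hab
    exact Subtype.ext hab
  calc essArity g ≤ Nat.card {j : Fin n // j ∈ J} := Nat.card_le_card_of_injective _ hinj
    _ = J.card := by simp [Nat.card_eq_fintype_card]

lemma aux_kdec_congr {k : ℕ} {f g : (Fin n → A) → B} (h : ∀ x, f x = g x)
    (hg : KDecomposable k g) : KDecomposable k f := by
  obtain ⟨s, G, hG1, hG2⟩ := hg
  exact ⟨s, G, hG1, fun x => (h x).trans (hG2 x)⟩

lemma aux_kdec_single {k : ℕ} (g : (Fin n → A) → B) (h : essArity g ≤ k) :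
    KDecomposable k g :=
  ⟨1, fun _ => g, fun _ => h, fun x => by simp⟩

lemma aux_kdec_add {k : ℕ} {f g : (Fin n → A) → B} (hf : KDecomposable k f)
    (hg : KDecomposable k g) : KDecomposable k (fun x => f x + g x) := by
  obtain ⟨s, F, hF1, hF2⟩ := hf
  obtain ⟨t, G, hG1, hG2⟩ := hg
  refine ⟨s + t, Fin.addCases F G, ?_, ?_⟩
  · intro i
    refine Fin.addCases (fun i => ?_) (fun i => ?_) i
    · simpa only [Fin.addCases_left] using hF1 i
    · simpa only [Fin.addCases_right] using hG1 i
  · intro x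
    rw [Fin.sum_univ_add]
    simp only [Fin.addCases_left, Fin.addCases_right]
    rw [← hF2 x, ← hG2 x]

lemma aux_kdec_sum {k : ℕ} {ι : Type*} (s : Finset ι) (F : ι → (Fin n → A) → B)
    (h : ∀ i ∈ s, KDecomposable k (F i)) :
    KDecomposable k (fun x => ∑ i ∈ s, F i x) := by
  classical
  induction s using Finset.induction_on with
  | empty => exact ⟨0, fun i => i.elim0, fun i => i.elim0, fun x => by simp⟩
  | @insert a s ha ih =>
      have := aux_kdec_add (h a (mem_insert_self a s))
        (ih fun i hi => h i (mem_insert_of_mem hi))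
      exact aux_kdec_congr (fun x => Finset.sum_insert ha) this

lemma aux_kdec_mono {k k' : ℕ} (hk : k ≤ k') {f : (Fin n → A) → B}
    (hf : KDecomposable k f) : KDecomposable k' f := by
  obtain ⟨s, G, hG1, hG2⟩ := hf
  exact ⟨s, G, fun i => (hG1 i).trans hk, hG2⟩

end Aux
section Aux2

open Finset

variable {A B : Type*} [DecidableEq A] [AddCommGroup B] {n : ℕ}

/-- parity bit of the number of occurrences of `a` in `x`, as an integer -/
def bitI (a : A) (x : Fin n → A) : ℤ :=
  (((univ : Finset (Fin n)).filter fun j => x j = a).card : ℤ) % 2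

lemma aux_cnt_eq_sum (a : A) (x : Fin n → A) :
    (((univ : Finset (Fin n)).filter fun j => x j = a).card : ℤ)
      = ∑ j : Fin n, (if x j = a then (1 : ℤ) else 0) := by
  rw [Finset.card_filter]
  push_cast
  rfl

lemma aux_prod_sign (s : Finset (Fin n)) (u : Fin n → ℤ) (hu : ∀ j, u j = 0 ∨ u j = 1) :
    ∏ j ∈ s, (1 - 2 * u j) = 1 - 2 * ((∑ j ∈ s, u j) % 2) := by
  induction s using Finset.induction_on with
  | empty => simp
  | @insert j s hj ih =>
      rw [prod_insert hj, sum_insert hj, ih]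
      rcases hu j with h | h <;>
        rcases Int.emod_two_eq_zero_or_one (∑ i ∈ s, u i) with h2 | h2 <;>
        · rw [h, h2]
          norm_num
          omega

lemma aux_bit_expand (a : A) (x : Fin n → A) :
    bitI a x = ∑ J ∈ (univ : Finset (Fin n)).powerset,
      (if J = ∅ then 0 else (-2 : ℤ) ^ (J.card - 1)) *
        ∏ j ∈ J, (if x j = a then (1 : ℤ) else 0) := by
  have h2 : (-2 : ℤ) ≠ 0 := by norm_num
  apply mul_left_cancel₀ h2
  set u : Fin n → ℤ := fun j => if x j = a then (1 : ℤ) else 0 with hu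
  have hu01 : ∀ j, u j = 0 ∨ u j = 1 := by
    intro j; by_cases h : x j = a <;> simp [hu, h]
  -- RHS
  rw [Finset.mul_sum]
  have hR : ∀ J ∈ (univ : Finset (Fin n)).powerset,
      (-2 : ℤ) * ((if J = ∅ then 0 else (-2 : ℤ) ^ (J.card - 1)) * ∏ j ∈ J, u j)
        = (if J = ∅ then 0 else (-2 : ℤ) ^ J.card) * ∏ j ∈ J, u j := by
    intro J _
    by_cases hJ : J = ∅
    · simp [hJ]
    · have hc : J.card ≠ 0 := by simpa [Finset.card_eq_zero] using hJ
      rw [if_neg hJ, if_neg hJ, ← mul_assoc, ← pow_succ']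
      congr 2
      omega
  rw [Finset.sum_congr rfl hR]
  have hstep : ∑ J ∈ (univ : Finset (Fin n)).powerset,
      (if J = ∅ then 0 else (-2 : ℤ) ^ J.card) * ∏ j ∈ J, u j
      = (∑ J ∈ (univ : Finset (Fin n)).powerset, (-2 : ℤ) ^ J.card * ∏ j ∈ J, u j) - 1 := by
    have hterm : ∀ J ∈ (univ : Finset (Fin n)).powerset,
        (if J = ∅ then 0 else (-2 : ℤ) ^ J.card) * ∏ j ∈ J, u j
          = (-2 : ℤ) ^ J.card * ∏ j ∈ J, u j - (if J = ∅ then 1 else 0) := by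
      intro J _
      by_cases hJ : J = ∅ <;> simp [hJ]
    rw [Finset.sum_congr rfl hterm, Finset.sum_sub_distrib]
    congr 1
    rw [Finset.sum_ite_eq' (univ : Finset (Fin n)).powerset (∅ : Finset (Fin n))
      (fun _ => (1 : ℤ))]
    simp
  rw [hstep]
  have hprod : ∑ J ∈ (univ : Finset (Fin n)).powerset, (-2 : ℤ) ^ J.card * ∏ j ∈ J, u j
      = ∏ j : Fin n, (1 - 2 * u j) := by
    have := Finset.prod_add (fun j : Fin n => -2 * u j) (fun _ : Fin n => (1 : ℤ)) univ
    simp only [prod_const_one, mul_one] at this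
    rw [show (∏ j : Fin n, (1 - 2 * u j)) = ∏ j : Fin n, (-2 * u j + 1) from
      Finset.prod_congr rfl (fun j _ => by ring), this]
    apply Finset.sum_congr rfl
    intro J _
    rw [Finset.prod_mul_distrib, Finset.prod_const]
  rw [hprod, aux_prod_sign univ u hu01]
  rw [bitI, aux_cnt_eq_sum a x]
  ring

end Aux2
section Aux3

open Finset

variable {A B : Type*} [DecidableEq A] [AddCommGroup B] {n : ℕ}

lemma aux_kdec_prod_bits (e : ℕ) (S : Finset A) (c : B) (hc : ((2 : ℤ) ^ e) • c = 0) :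
    KDecomposable (S.card + e - 1) (fun x : Fin n → A => (∏ a ∈ S, bitI a x) • c) := by
  classical
  set P : Finset (Finset (Fin n)) := (univ : Finset (Fin n)).powerset with hP
  set W : Finset (Fin n) → ℤ := fun J => if J = ∅ then 0 else (-2 : ℤ) ^ (J.card - 1) with hW
  set G : (∀ a ∈ S, Finset (Fin n)) → (Fin n → A) → B := fun p x =>
    ((∏ aa ∈ S.attach, W (p aa.1 aa.2)) *
      ∏ aa ∈ S.attach, ∏ j ∈ p aa.1 aa.2, (if x j = aa.1 then (1 : ℤ) else 0)) • c with hG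
  have hpt : ∀ x : Fin n → A, (∏ a ∈ S, bitI a x) • c
      = ∑ p ∈ S.pi fun _ => P, G p x := by
    intro x
    have h1 : ∏ a ∈ S, bitI a x
        = ∑ p ∈ S.pi fun _ => P, ∏ aa ∈ S.attach,
            (W (p aa.1 aa.2) * ∏ j ∈ p aa.1 aa.2, (if x j = aa.1 then (1 : ℤ) else 0)) := by
      rw [show ∏ a ∈ S, bitI a x = ∏ a ∈ S, ∑ J ∈ P,
          W J * ∏ j ∈ J, (if x j = a then (1 : ℤ) else 0) from
        Finset.prod_congr rfl fun a _ => aux_bit_expand a x]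
      exact Finset.prod_sum S (fun _ => P) _
    rw [h1, Finset.sum_smul]
    apply Finset.sum_congr rfl
    intro p _
    rw [hG, Finset.prod_mul_distrib]
  apply aux_kdec_congr hpt
  apply aux_kdec_sum
  intro p _
  by_cases hd : (2 : ℤ) ^ e ∣ ∏ aa ∈ S.attach, W (p aa.1 aa.2)
  · -- the coefficient kills c
    obtain ⟨q, hq⟩ := hd
    have hzero : ∀ x, G p x = 0 := by
      intro x
      rw [hG]
      simp only
      rw [hq, show (2 : ℤ) ^ e * q *
          ∏ aa ∈ S.attach, ∏ j ∈ p aa.1 aa.2, (if x j = aa.1 then (1 : ℤ) else 0)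
        = (q * ∏ aa ∈ S.attach, ∏ j ∈ p aa.1 aa.2, (if x j = aa.1 then (1 : ℤ) else 0))
            * (2 : ℤ) ^ e from by ring, mul_smul, hc, smul_zero]
    apply aux_kdec_single
    have := aux_essArity_le_junta (∅ : Finset (Fin n)) (G p)
      (fun x x' _ => by rw [hzero x, hzero x'])
    simpa using this.trans (Nat.zero_le _)
  · -- all parts nonempty and total size small
    have hne : ∀ aa ∈ S.attach, p aa.1 aa.2 ≠ ∅ := by
      intro aa ha haa
      exact hd ⟨0, by rw [Finset.prod_eq_zero ha (by rw [hW]; simp [haa]), mul_zero]⟩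
    have hdvd2 : (2 : ℤ) ^ (∑ aa ∈ S.attach, ((p aa.1 aa.2).card - 1))
        ∣ ∏ aa ∈ S.attach, W (p aa.1 aa.2) := by
      rw [← Finset.prod_pow_eq_pow_sum]
      apply Finset.prod_dvd_prod_of_dvd
      intro aa ha
      rw [hW]
      simp only [if_neg (hne aa ha)]
      exact ⟨(-1 : ℤ) ^ ((p aa.1 aa.2).card - 1), by rw [← mul_pow]; norm_num⟩
    have hlt : (∑ aa ∈ S.attach, ((p aa.1 aa.2).card - 1)) < e := by
      by_contra hge
      push_neg at hge
      exact hd ((pow_dvd_pow (2 : ℤ) hge).trans hdvd2)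
    set J : Finset (Fin n) := S.attach.biUnion (fun aa => p aa.1 aa.2) with hJ
    have hcard : J.card ≤ S.card + e - 1 := by
      calc J.card ≤ ∑ aa ∈ S.attach, (p aa.1 aa.2).card := Finset.card_biUnion_le
        _ = ∑ aa ∈ S.attach, (((p aa.1 aa.2).card - 1) + 1) := by
            apply Finset.sum_congr rfl
            intro aa ha
            have : (p aa.1 aa.2).card ≠ 0 := by
              simpa [Finset.card_eq_zero] using hne aa ha
            omega
        _ = (∑ aa ∈ S.attach, ((p aa.1 aa.2).card - 1)) + S.card := by
            rw [Finset.sum_add_distrib, Finset.sum_const, Finset.card_attach, smul_eq_mul,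
              mul_one]
        _ ≤ S.card + e - 1 := by omega
    apply aux_kdec_single
    refine le_trans (aux_essArity_le_junta J (G p) ?_) hcard
    intro x x' hxx
    rw [hG]
    simp only
    congr 1
    congr 1
    apply Finset.prod_congr rfl
    intro aa ha
    apply Finset.prod_congr rfl
    intro j hj
    rw [hxx j (Finset.mem_biUnion.mpr ⟨aa, ha, hj⟩)]

end Aux3
section Aux4

open Finset

variable {A B : Type*} [DecidableEq A] {n : ℕ}

lemma aux_mem_oddsupp {x : Fin n → A} {a : A} :
    a ∈ oddsupp x ↔ Odd (((univ : Finset (Fin n)).filter fun j => x j = a).card) := by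
  unfold oddsupp
  rw [Finset.mem_filter]
  constructor
  · exact fun h => h.2
  · intro h
    refine ⟨?_, h⟩
    have hpos : 0 < ((univ : Finset (Fin n)).filter fun j => x j = a).card := by
      rcases h with ⟨t, ht⟩; omega
    obtain ⟨j, hj⟩ := Finset.card_pos.mp hpos
    exact Finset.mem_image.mpr ⟨j, Finset.mem_univ j, (Finset.mem_filter.mp hj).2⟩

lemma aux_bit_eq (a : A) (x : Fin n → A) :
    bitI a x = if a ∈ oddsupp x then 1 else 0 := by
  rw [bitI]
  rcases Nat.even_or_odd (((univ : Finset (Fin n)).filter fun j => x j = a).card) with h | h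
  · rw [if_neg (by rw [aux_mem_oddsupp]; exact (Nat.not_odd_iff_even.mpr h))]
    obtain ⟨t, ht⟩ := h
    rw [ht]; push_cast; omega
  · rw [if_pos (aux_mem_oddsupp.mpr h)]
    obtain ⟨t, ht⟩ := h
    rw [ht]; push_cast; omega

lemma aux_oddsupp_eq_filter [Fintype A] (x : Fin n → A) :
    oddsupp x = (univ : Finset A).filter
      fun a => Odd (((univ : Finset (Fin n)).filter fun j => x j = a).card) := by
  ext a
  rw [aux_mem_oddsupp, Finset.mem_filter]
  simp

lemma aux_oddsupp_card_parity [Fintype A] (x : Fin n → A) :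
    (oddsupp x).card % 2 = n % 2 := by
  have hn : n = ∑ a ∈ (univ : Finset A),
      ((univ : Finset (Fin n)).filter fun j => x j = a).card := by
    have := Finset.card_eq_sum_card_fiberwise
      (f := x) (s := (univ : Finset (Fin n))) (t := (univ : Finset A))
      (fun j _ => Finset.mem_univ (x j))
    simpa using this
  have h2 : (oddsupp x).card = ∑ a ∈ (univ : Finset A),
      (if Odd (((univ : Finset (Fin n)).filter fun j => x j = a).card) then 1 else 0) := by
    rw [aux_oddsupp_eq_filter, Finset.card_filter]
  rw [h2]
  conv_rhs => rw [hn]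
  rw [Finset.sum_nat_mod]
  conv_rhs => rw [Finset.sum_nat_mod]
  congr 2
  funext a
  rcases Nat.even_or_odd (((univ : Finset (Fin n)).filter fun j => x j = a).card) with h | h
  · rw [if_neg (Nat.not_odd_iff_even.mpr h)]
    have := Nat.even_iff.mp h
    omega
  · rw [if_pos h]
    have := Nat.odd_iff.mp h
    omega

end Aux4
theorem decomposable_of_exponent_two_pow {A B : Type*} [Fintype A] [DecidableEq A]
    [AddCommGroup B] {e : ℕ} (hB : AddMonoid.exponent B = 2 ^ e) {n : ℕ}
    (f : (Fin n → A) → B) (hf : DeterminedByOddsupp f) :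
    KDecomposable (Fintype.card A + e - 2) f := by
  classical
  obtain ⟨φ, hφ⟩ := hf
  rcases isEmpty_or_nonempty A with hA | hA
  · apply aux_kdec_single
    have h := aux_essArity_le_junta (∅ : Finset (Fin n)) f
      (fun x x' _ => congrArg f (funext fun j => (hA.false (x j)).elim))
    have h0 : essArity f ≤ 0 := by simpa using h
    exact le_trans h0 (Nat.zero_le _)
  · obtain ⟨a₀⟩ := hA
    set m := Fintype.card A with hm
    have hm1 : 1 ≤ m := Fintype.card_pos_iff.mpr ⟨a₀⟩
    set A' : Finset A := (univ : Finset A).erase a₀ with hA'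
    have hA'card : A'.card = m - 1 := by
      rw [hA', Finset.card_erase_of_mem (mem_univ a₀), Finset.card_univ]
    set ψ : Finset A → B := fun V => φ (if V.card % 2 = n % 2 then V else insert a₀ V) with hψ
    have hexp : ∀ b : B, ((2 : ℤ) ^ e) • b = 0 := by
      intro b
      have h1 : AddMonoid.exponent B • b = 0 := AddMonoid.exponent_nsmul_eq_zero b
      rw [hB] at h1
      rw [show ((2 : ℤ) ^ e) = ((2 ^ e : ℕ) : ℤ) by push_cast; ring, natCast_zsmul]
      exact h1
    -- Step I : expand f through the parity bits
    have stepI : ∀ x, f x = ∑ V ∈ A'.powerset,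
        (∏ a ∈ A', ((if a ∈ V then (1 : ℤ) else -1) * bitI a x +
          (if a ∈ V then 0 else 1))) • ψ V := by
      intro x
      set Wx : Finset A := (oddsupp x).erase a₀ with hWx
      have hWmem : Wx ∈ A'.powerset :=
        Finset.mem_powerset.mpr (Finset.erase_subset_erase a₀ (Finset.subset_univ _))
      have hbit : ∀ a, bitI a x = if a ∈ oddsupp x then 1 else 0 := fun a => aux_bit_eq a x
      have hside : ∀ V ∈ A'.powerset, V ≠ Wx →
          (∏ a ∈ A', ((if a ∈ V then (1 : ℤ) else -1) * bitI a x +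
            (if a ∈ V then 0 else 1))) • ψ V = 0 := by
        intro V hV hVW
        obtain ⟨a, ha⟩ : ∃ a, ¬(a ∈ V ↔ a ∈ Wx) := by
          by_contra h
          push_neg at h
          exact hVW (Finset.ext fun a => h a)
        by_cases haV : a ∈ V
        · have haW : a ∉ Wx := fun hw => ha ⟨fun _ => hw, fun _ => haV⟩
          have haA' : a ∈ A' := Finset.mem_powerset.mp hV haV
          have hne : a ≠ a₀ := Finset.ne_of_mem_erase haA'
          have hodd : a ∉ oddsupp x := fun ho => haW (Finset.mem_erase.mpr ⟨hne, ho⟩)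
          rw [Finset.prod_eq_zero haA' (by simp [haV, hbit a, hodd]), zero_smul]
        · have haW : a ∈ Wx := by
            by_contra hw
            exact ha ⟨fun hv => absurd hv haV, fun hw' => absurd hw' hw⟩
          have haA' : a ∈ A' := Finset.mem_powerset.mp hWmem haW
          have hodd : a ∈ oddsupp x := Finset.mem_of_mem_erase haW
          rw [Finset.prod_eq_zero haA' (by simp [haV, hbit a, hodd]), zero_smul]
      rw [Finset.sum_eq_single_of_mem Wx hWmem hside]
      have hprod1 : (∏ a ∈ A', ((if a ∈ Wx then (1 : ℤ) else -1) * bitI a x +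
          (if a ∈ Wx then 0 else 1))) = 1 := by
        apply Finset.prod_eq_one
        intro a haA'
        have hne : a ≠ a₀ := Finset.ne_of_mem_erase haA'
        by_cases haW : a ∈ Wx
        · have hodd : a ∈ oddsupp x := Finset.mem_of_mem_erase haW
          simp [haW, hbit a, hodd]
        · have hodd : a ∉ oddsupp x := fun ho => haW (Finset.mem_erase.mpr ⟨hne, ho⟩)
          simp [haW, hbit a, hodd]
      rw [hprod1, one_smul]
      have hpar := aux_oddsupp_card_parity x
      by_cases h0 : a₀ ∈ oddsupp x
      · have hcWx : Wx.card = (oddsupp x).card - 1 := Finset.card_erase_of_mem h0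
        have hpos : 1 ≤ (oddsupp x).card := Finset.card_pos.mpr ⟨a₀, h0⟩
        have hno : ¬ (Wx.card % 2 = n % 2) := by omega
        rw [hψ]
        simp only
        rw [if_neg hno, Finset.insert_erase h0, hφ x]
      · have hW0 : Wx = oddsupp x := Finset.erase_eq_of_notMem h0
        have hyes : Wx.card % 2 = n % 2 := by rw [hW0]; exact hpar
        rw [hψ]
        simp only
        rw [if_pos hyes, hW0, hφ x]
    -- Step II : expand each product into monomials in the bits
    set cc : Finset A → Finset A → B := fun V S =>
      ((∏ a ∈ S, (if a ∈ V then (1 : ℤ) else -1)) *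
        (∏ a ∈ A' \ S, (if a ∈ V then (0 : ℤ) else 1))) • ψ V with hcc
    have stepII : ∀ x, f x = ∑ V ∈ A'.powerset, ∑ S ∈ A'.powerset,
        (∏ a ∈ S, bitI a x) • cc V S := by
      intro x
      rw [stepI x]
      apply Finset.sum_congr rfl
      intro V _
      rw [Finset.prod_add (fun a => (if a ∈ V then (1 : ℤ) else -1) * bitI a x)
        (fun a => if a ∈ V then (0 : ℤ) else 1) A', Finset.sum_smul]
      apply Finset.sum_congr rfl
      intro S _
      rw [Finset.prod_mul_distrib, hcc]
      simp only
      rw [← mul_smul]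
      congr 1
      ring
    apply aux_kdec_congr stepII
    apply aux_kdec_sum
    intro V _
    apply aux_kdec_sum
    intro S hS
    have hScard : S.card ≤ m - 1 := hA'card ▸ Finset.card_le_card (Finset.mem_powerset.mp hS)
    apply aux_kdec_mono (show S.card + e - 1 ≤ m + e - 2 by omega)
    apply aux_kdec_prod_bits e S (cc V S)
    rw [hcc]
    simp only
    rw [smul_comm, hexp (ψ V), smul_zero]
end

section
/- If A is a finite set with at least two elements and B is an abelian group containing an element whose order is not a power of 2 (in particular, if the exponent of B is not a power of 2), then for each n ≥ 2 there exists a function f : A^n → B determined by oddsupp that is not decomposable, i.e., not (n − 1)-decomposable. -/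
open Finset

theorem exists_not_decomposable_of_bad_order {A B : Type*} [Fintype A] [DecidableEq A]
    [AddCommGroup B] (hA : 2 ≤ Fintype.card A)
    (hB : ∃ b : B, ∀ k : ℕ, addOrderOf b ≠ 2 ^ k) :
    ∀ n : ℕ, 2 ≤ n → ∃ f : (Fin n → A) → B, DeterminedByOddsupp f ∧
      ¬ KDecomposable (n - 1) f := by
  obtain ⟨b, hb⟩ := hB
  obtain ⟨a1, a0, hne⟩ := Fintype.exists_pair_of_one_lt_card hA
  intro n hn
  set f : (Fin n → A) → B := fun x =>
    if Odd ((Finset.univ.filter fun j => x j = a1).card) then b else 0 with hf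
  have hmem : ∀ x : Fin n → A,
      (a1 ∈ oddsupp x ↔ Odd ((Finset.univ.filter fun j => x j = a1).card)) := by
    intro x
    unfold oddsupp
    rw [Finset.mem_filter]
    constructor
    · exact fun h => h.2
    · intro h
      refine ⟨?_, h⟩
      obtain ⟨j, hj⟩ := Finset.card_pos.mp h.pos
      rw [Finset.mem_filter] at hj
      exact Finset.mem_image.mpr ⟨j, Finset.mem_univ j, hj.2⟩
  refine ⟨f, ⟨fun S => if a1 ∈ S then b else 0, fun x => if_congr (hmem x).symm rfl rfl⟩, ?_⟩
  rintro ⟨s, g, hg, hsum⟩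
  set χ : Finset (Fin n) → (Fin n → A) := fun S j => if j ∈ S then a1 else a0 with hχ
  -- alternating sum kills each g i
  have key : ∀ i : Fin s, ∑ S : Finset (Fin n), ((-1:ℤ)^S.card) • g i (χ S) = 0 := by
    intro i
    have hnotall : ¬ ∀ k, essentialAt (g i) k := by
      intro hall
      have h1 := hg i
      rw [essArity, Nat.card_congr (Equiv.subtypeUnivEquiv hall), Nat.card_eq_fintype_card,
        Fintype.card_fin] at h1
      omega
    push_neg at hnotall
    obtain ⟨k, hk⟩ := hnotall
    rw [essentialAt] at hk
    push_neg at hk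
    refine Finset.sum_involution (fun S _ => if k ∈ S then S.erase k else insert k S)
      ?_ ?_ (fun S _ => Finset.mem_univ _) ?_
    · intro S _
      have hval : g i (χ S) = g i (χ (if k ∈ S then S.erase k else insert k S)) := by
        apply hk
        intro m hm
        by_cases hkS : k ∈ S <;>
          simp [hχ, hkS, Finset.mem_erase, Finset.mem_insert, hm]
      rw [← hval]
      by_cases hkS : k ∈ S
      · rw [if_pos hkS]
        have hcard : S.card = (S.erase k).card + 1 := (Finset.card_erase_add_one hkS).symm
        rw [hcard, pow_succ, mul_comm, mul_smul, neg_one_zsmul, neg_add_cancel]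
      · rw [if_neg hkS, Finset.card_insert_of_notMem hkS, pow_succ, mul_comm, mul_smul,
          neg_one_zsmul, add_neg_cancel]
    · intro S _ _
      by_cases hkS : k ∈ S
      · rw [if_pos hkS]
        exact fun h => (Finset.notMem_erase k S) (h.symm ▸ hkS)
      · rw [if_neg hkS]
        exact fun h => hkS (h ▸ Finset.mem_insert_self k S)
    · intro S _
      by_cases hkS : k ∈ S <;>
        simp [hkS, Finset.notMem_erase, Finset.insert_erase, Finset.erase_insert]
  -- so the alternating sum of f vanishes
  have hTf : ∑ S : Finset (Fin n), ((-1:ℤ)^S.card) • f (χ S) = 0 := by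
    calc ∑ S : Finset (Fin n), ((-1:ℤ)^S.card) • f (χ S)
        = ∑ S : Finset (Fin n), ∑ i, ((-1:ℤ)^S.card) • g i (χ S) := by
          simp_rw [hsum, Finset.smul_sum]
      _ = ∑ i, ∑ S : Finset (Fin n), ((-1:ℤ)^S.card) • g i (χ S) := Finset.sum_comm
      _ = 0 := by simp [key]
  -- evaluate each term of the alternating sum of f
  have heval : ∀ S : Finset (Fin n),
      ((-1:ℤ)^S.card) • f (χ S) = if Odd S.card then -b else 0 := by
    intro S
    have hfil : (Finset.univ.filter fun j => χ S j = a1) = S := by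
      ext j
      by_cases hj : j ∈ S <;> simp [hχ, hj, hne.symm]
    rw [hf]
    simp only [hfil]
    by_cases hodd : Odd S.card
    · rw [if_pos hodd, if_pos hodd, Odd.neg_one_pow hodd, neg_one_zsmul]
    · simp [hodd]
  set N := (Finset.univ.filter fun S : Finset (Fin n) => Odd S.card).card with hN
  have hNb : N • b = 0 := by
    have h0 : ∑ S : Finset (Fin n), (if Odd S.card then -b else 0) = 0 := by
      rw [← Finset.sum_congr rfl (fun S _ => heval S)]
      exact hTf
    rw [← Finset.sum_filter, Finset.sum_const, ← hN, smul_neg] at h0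
    rw [← neg_neg (N • b), h0, neg_zero]
  -- count: N = 2^(n-1)
  have hz : ∑ S : Finset (Fin n), ((-1:ℤ)^S.card) = 0 := by
    rw [← Finset.powerset_univ, Finset.sum_powerset_neg_one_pow_card]
    have hne' : (Finset.univ : Finset (Fin n)) ≠ ∅ :=
      Finset.nonempty_iff_ne_empty.mp ⟨⟨0, by omega⟩, Finset.mem_univ _⟩
    rw [if_neg hne']
  set M := (Finset.univ.filter fun S : Finset (Fin n) => ¬ Odd S.card).card with hM
  have hsplit : N + M = 2 ^ n := by
    rw [hN, hM, Finset.card_filter_add_card_filter_not, Finset.card_univ,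
      Fintype.card_finset, Fintype.card_fin]
  have heqNM : N = M := by
    have h1 : ∑ S ∈ Finset.univ.filter (fun S : Finset (Fin n) => Odd S.card),
        ((-1:ℤ)^S.card) = -(N:ℤ) := by
      rw [Finset.sum_congr rfl (fun S hS => Odd.neg_one_pow (Finset.mem_filter.mp hS).2),
        Finset.sum_const, ← hN, nsmul_eq_mul, mul_neg_one]
    have h2 : ∑ S ∈ Finset.univ.filter (fun S : Finset (Fin n) => ¬ Odd S.card),
        ((-1:ℤ)^S.card) = (M:ℤ) := by
      rw [Finset.sum_congr rfl (fun S hS =>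
        Even.neg_one_pow (Nat.not_odd_iff_even.mp (Finset.mem_filter.mp hS).2)),
        Finset.sum_const, ← hM, nsmul_eq_mul, mul_one]
    have h3 := hz
    rw [← Finset.sum_filter_add_sum_filter_not Finset.univ
      (fun S : Finset (Fin n) => Odd S.card), h1, h2] at h3
    have : (N : ℤ) = (M : ℤ) := by omega
    exact_mod_cast this
  have hNval : N = 2 ^ (n - 1) := by
    have h2 : 2 ^ n = 2 * 2 ^ (n - 1) := by
      conv_lhs => rw [show n = (n - 1) + 1 by omega]
      rw [pow_succ]
      ring
    omega
  rw [hNval] at hNb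
  obtain ⟨k, _, hk⟩ := (Nat.dvd_prime_pow Nat.prime_two).mp
    (addOrderOf_dvd_of_nsmul_eq_zero hNb)
  exact hb k hk
end

section
/- Let B be a finite Boolean group, A a finite set, and f : A^n → B with n − |A| = 2t + 1 > 0. Then f is determined by oddsupp if and only if there is a map φ : P'_n(A) → B such that for all x ∈ A^n, f(x) = Σ_{i=t+1}^{⌊n/2⌋} Σ_{I ⊆ [n], |I| = n−2i} C(i−1, t) · Θ_φ(x|_I), where C(i−1, t) · b denotes the C(i−1, t)-fold sum b + ⋯ + b in B. Moreover, the map φ is uniquely determined by f. -/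
open Finset

/-- The canonical symmetric decomposition formula in the odd case. -/
def decompOdd {A B : Type*} [DecidableEq A] [AddCommMonoid B] {n : ℕ} (t : ℕ)
    (φ : Finset A → B) (x : Fin n → A) : B :=
  ∑ i ∈ Finset.Icc (t + 1) (n / 2),
    ∑ I ∈ Finset.univ.filter (fun I : Finset (Fin n) => I.card = n - 2 * i),
      Nat.choose (i - 1) t • φ (oddsuppOn I x)

namespace DecompAux

variable {A B : Type*} [DecidableEq A]

lemma mem_oddsuppOn_iff {n : ℕ} {I : Finset (Fin n)} {x : Fin n → A} {a : A} :
    a ∈ oddsuppOn I x ↔ Odd ((I.filter fun j => x j = a).card) := by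
  unfold oddsuppOn
  rw [mem_filter, mem_image]
  constructor
  · rintro ⟨-, h⟩; exact h
  · intro h
    refine ⟨?_, h⟩
    obtain ⟨j, hj⟩ := card_pos.mp h.pos
    rw [mem_filter] at hj
    exact ⟨j, hj.1, hj.2⟩

lemma oddsuppOn_insert_swap {n : ℕ} {x : Fin n → A} {j j' : Fin n} {I : Finset (Fin n)}
    (hxx : x j = x j') (hj : j ∉ I) (hj' : j' ∉ I) :
    oddsuppOn (insert j I) x = oddsuppOn (insert j' I) x := by
  ext a
  rw [mem_oddsuppOn_iff, mem_oddsuppOn_iff, filter_insert, filter_insert, hxx]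
  split_ifs with h
  · rw [card_insert_of_notMem (fun hc => hj (mem_filter.mp hc).1),
        card_insert_of_notMem (fun hc => hj' (mem_filter.mp hc).1)]
  · rfl

lemma oddsuppOn_insert_pair {n : ℕ} {x : Fin n → A} {j j' : Fin n} {I : Finset (Fin n)}
    (hxx : x j = x j') (hne : j ≠ j') (hj : j ∉ I) (hj' : j' ∉ I) :
    oddsuppOn (insert j (insert j' I)) x = oddsuppOn I x := by
  ext a
  rw [mem_oddsuppOn_iff, mem_oddsuppOn_iff, filter_insert, filter_insert, hxx]
  split_ifs with h
  · have h1 : j' ∉ I.filter fun k => x k = a := fun hc => hj' (mem_filter.mp hc).1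
    have h2 : j ∉ insert j' (I.filter fun k => x k = a) := by
      simp only [mem_insert]
      rintro (rfl | hc)
      · exact hne rfl
      · exact hj (mem_filter.mp hc).1
    rw [card_insert_of_notMem h2, card_insert_of_notMem h1, Nat.odd_iff, Nat.odd_iff]
    omega
  · rfl

variable [AddCommGroup B]

/-- Sum of `φ (oddsupp (x|_I))` over subsets of `K` of size `m`. -/
def auxH (φ : Finset A → B) {n : ℕ} (x : Fin n → A) (K : Finset (Fin n)) (m : ℕ) : B :=
  ∑ I ∈ K.powersetCard m, φ (oddsuppOn I x)

lemma quad_helper (hB : ∀ b : B, b + b = 0) (p w q : B) : (p + w) + (w + q) = q + p := by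
  have h := hB w
  calc (p + w) + (w + q) = (q + p) + (w + w) := by abel
    _ = q + p := by rw [h, add_zero]

lemma sum_pair_split (hB : ∀ b : B, b + b = 0) (φ : Finset A → B) {n : ℕ} (x : Fin n → A)
    {K : Finset (Fin n)} {j j' : Fin n}
    (hjK : j ∈ K) (hj'K : j' ∈ K) (hne : j ≠ j') (hxx : x j = x j') (m : ℕ) :
    auxH φ x K m = auxH φ x ((K.erase j).erase j') m +
      ∑ I ∈ (K.powersetCard m).filter (fun I => j ∈ I ∧ j' ∈ I), φ (oddsuppOn I x) := by
  classical
  have e1 := sum_filter_add_sum_filter_not (K.powersetCard m) (fun I => j ∈ I)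
    (fun I => φ (oddsuppOn I x))
  have e2 := sum_filter_add_sum_filter_not ((K.powersetCard m).filter (fun I => j ∈ I))
    (fun I => j' ∈ I) (fun I => φ (oddsuppOn I x))
  have e3 := sum_filter_add_sum_filter_not ((K.powersetCard m).filter (fun I => ¬ j ∈ I))
    (fun I => j' ∈ I) (fun I => φ (oddsuppOn I x))
  rw [filter_filter, filter_filter] at e2
  rw [filter_filter, filter_filter] at e3
  have h4 : (K.powersetCard m).filter (fun I => ¬ j ∈ I ∧ ¬ j' ∈ I)
      = ((K.erase j).erase j').powersetCard m := by
    ext I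
    simp only [mem_filter, mem_powersetCard, subset_erase]
    tauto
  have h23 : ∑ I ∈ (K.powersetCard m).filter (fun I => j ∈ I ∧ ¬ j' ∈ I), φ (oddsuppOn I x)
      = ∑ I ∈ (K.powersetCard m).filter (fun I => ¬ j ∈ I ∧ j' ∈ I), φ (oddsuppOn I x) := by
    refine Finset.sum_nbij' (fun I => insert j' (I.erase j)) (fun I => insert j (I.erase j'))
      ?_ ?_ ?_ ?_ ?_
    · intro I hI
      simp only [mem_filter, mem_powersetCard] at hI ⊢
      obtain ⟨⟨hIK, hcard⟩, hjI, hj'I⟩ := hI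
      have hj'e : j' ∉ I.erase j := fun h => hj'I (mem_of_mem_erase h)
      have hpos : 0 < I.card := card_pos.mpr ⟨j, hjI⟩
      refine ⟨⟨insert_subset hj'K ((erase_subset _ _).trans hIK), ?_⟩, ?_, mem_insert_self _ _⟩
      · rw [card_insert_of_notMem hj'e, card_erase_of_mem hjI]
        omega
      · intro h
        rcases mem_insert.mp h with h | h
        · exact hne h
        · exact notMem_erase j I h
    · intro I hI
      simp only [mem_filter, mem_powersetCard] at hI ⊢
      obtain ⟨⟨hIK, hcard⟩, hjI, hj'I⟩ := hI
      have hje : j ∉ I.erase j' := fun h => hjI (mem_of_mem_erase h)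
      have hpos : 0 < I.card := card_pos.mpr ⟨j', hj'I⟩
      refine ⟨⟨insert_subset hjK ((erase_subset _ _).trans hIK), ?_⟩, mem_insert_self _ _, ?_⟩
      · rw [card_insert_of_notMem hje, card_erase_of_mem hj'I]
        omega
      · intro h
        rcases mem_insert.mp h with h | h
        · exact hne h.symm
        · exact notMem_erase j' I h
    · intro I hI
      simp only [mem_filter, mem_powersetCard] at hI
      obtain ⟨⟨hIK, hcard⟩, hjI, hj'I⟩ := hI
      have hj'e : j' ∉ I.erase j := fun h => hj'I (mem_of_mem_erase h)
      show insert j ((insert j' (I.erase j)).erase j') = I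
      rw [erase_insert hj'e, insert_erase hjI]
    · intro I hI
      simp only [mem_filter, mem_powersetCard] at hI
      obtain ⟨⟨hIK, hcard⟩, hjI, hj'I⟩ := hI
      have hje : j ∉ I.erase j' := fun h => hjI (mem_of_mem_erase h)
      show insert j' ((insert j (I.erase j')).erase j) = I
      rw [erase_insert hje, insert_erase hj'I]
    · intro I hI
      simp only [mem_filter, mem_powersetCard] at hI
      obtain ⟨⟨hIK, hcard⟩, hjI, hj'I⟩ := hI
      have hj'e : j' ∉ I.erase j := fun h => hj'I (mem_of_mem_erase h)
      have h1 : oddsuppOn (insert j (I.erase j)) x = oddsuppOn (insert j' (I.erase j)) x :=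
        oddsuppOn_insert_swap hxx (notMem_erase j I) hj'e
      rw [insert_erase hjI] at h1
      exact congrArg φ h1
  unfold auxH
  rw [← e1, ← e2, ← e3, h23, h4]
  exact quad_helper hB _ _ _

lemma sum_pair_both (φ : Finset A → B) {n : ℕ} (x : Fin n → A)
    {K : Finset (Fin n)} {j j' : Fin n}
    (hjK : j ∈ K) (hj'K : j' ∈ K) (hne : j ≠ j') (hxx : x j = x j') (m : ℕ) :
    ∑ I ∈ (K.powersetCard (m + 2)).filter (fun I => j ∈ I ∧ j' ∈ I), φ (oddsuppOn I x)
      = auxH φ x ((K.erase j).erase j') m := by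
  unfold auxH
  refine Finset.sum_nbij' (fun I => (I.erase j).erase j') (fun I => insert j (insert j' I))
    ?_ ?_ ?_ ?_ ?_
  · intro I hI
    simp only [mem_filter, mem_powersetCard] at hI ⊢
    obtain ⟨⟨hIK, hcard⟩, hjI, hj'I⟩ := hI
    have hj'e : j' ∈ I.erase j := mem_erase.mpr ⟨fun h => hne h.symm, hj'I⟩
    constructor
    · exact erase_subset_erase _ (erase_subset_erase _ hIK)
    · rw [card_erase_of_mem hj'e, card_erase_of_mem hjI, hcard]
      omega
  · intro J hJ
    simp only [mem_powersetCard, subset_erase, mem_filter] at hJ ⊢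
    obtain ⟨⟨⟨hJK, hjJ⟩, hj'J⟩, hcard⟩ := hJ
    have hjins : j ∉ insert j' J := by
      simp only [mem_insert]
      rintro (rfl | h)
      · exact hne rfl
      · exact hjJ h
    refine ⟨⟨insert_subset hjK (insert_subset hj'K hJK), ?_⟩, mem_insert_self _ _,
      mem_insert_of_mem (mem_insert_self _ _)⟩
    rw [card_insert_of_notMem hjins, card_insert_of_notMem hj'J, hcard]
  · intro I hI
    simp only [mem_filter, mem_powersetCard] at hI
    obtain ⟨⟨hIK, hcard⟩, hjI, hj'I⟩ := hI
    have hj'e : j' ∈ I.erase j := mem_erase.mpr ⟨fun h => hne h.symm, hj'I⟩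
    show insert j (insert j' ((I.erase j).erase j')) = I
    rw [insert_erase hj'e, insert_erase hjI]
  · intro J hJ
    simp only [mem_powersetCard, subset_erase] at hJ
    obtain ⟨⟨⟨hJK, hjJ⟩, hj'J⟩, hcard⟩ := hJ
    have hjins : j ∉ insert j' J := by
      simp only [mem_insert]
      rintro (rfl | h)
      · exact hne rfl
      · exact hjJ h
    show ((insert j (insert j' J)).erase j).erase j' = J
    rw [erase_insert hjins, erase_insert hj'J]
  · intro I hI
    simp only [mem_filter, mem_powersetCard] at hI
    obtain ⟨⟨hIK, hcard⟩, hjI, hj'I⟩ := hI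
    have hj'e : j' ∈ I.erase j := mem_erase.mpr ⟨fun h => hne h.symm, hj'I⟩
    have h1 : oddsuppOn (insert j (insert j' ((I.erase j).erase j'))) x
        = oddsuppOn ((I.erase j).erase j') x :=
      oddsuppOn_insert_pair hxx hne
        (fun h => notMem_erase j I (mem_of_mem_erase h))
        (notMem_erase j' _)
    rw [insert_erase hj'e, insert_erase hjI] at h1
    exact congrArg φ h1

lemma sum_pair_both_small (φ : Finset A → B) {n : ℕ} (x : Fin n → A)
    {K : Finset (Fin n)} {j j' : Fin n} (hne : j ≠ j') {m : ℕ} (hm : m ≤ 1) :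
    ∑ I ∈ (K.powersetCard m).filter (fun I => j ∈ I ∧ j' ∈ I), φ (oddsuppOn I x) = 0 := by
  have hempty : (K.powersetCard m).filter (fun I => j ∈ I ∧ j' ∈ I) = ∅ := by
    rw [filter_eq_empty_iff]
    intro I hI hmem
    have h1 : 1 < I.card := one_lt_card.mpr ⟨j, hmem.1, j', hmem.2, hne⟩
    have h2 := (mem_powersetCard.mp hI).2
    omega
  rw [hempty, sum_empty]

lemma smul_parity (hB : ∀ b : B, b + b = 0) {k l : ℕ} (h : k % 2 = l % 2) (y : B) :
    k • y = l • y := by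
  have h2 : ∀ m : ℕ, (2 * m) • y = 0 := by
    intro m
    rw [mul_nsmul, two_nsmul, hB, smul_zero]
  have key : ∀ m : ℕ, m • y = (m % 2) • y := by
    intro m
    conv_lhs => rw [← Nat.mod_add_div m 2, add_nsmul, h2, add_zero]
  rw [key k, key l, h]

lemma tele (hB : ∀ b : B, b + b = 0) (a : ℕ → B) (v' : ℕ) :
    ((∑ r ∈ range v', a (r + 1)) + ∑ r ∈ range v', a r) + a 0 = a v' := by
  have h1 : (∑ r ∈ range v', a (r + 1)) + a 0 = (∑ r ∈ range v', a r) + a v' := by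
    rw [← Finset.sum_range_succ', Finset.sum_range_succ]
  calc ((∑ r ∈ range v', a (r + 1)) + ∑ r ∈ range v', a r) + a 0
      = ((∑ r ∈ range v', a (r + 1)) + a 0) + ∑ r ∈ range v', a r := by abel
    _ = ((∑ r ∈ range v', a r) + a v') + ∑ r ∈ range v', a r := by rw [h1]
    _ = a v' + ((∑ r ∈ range v', a r) + ∑ r ∈ range v', a r) := by abel
    _ = a v' := by rw [hB, add_zero]

lemma step_alg (hB : ∀ b : B, b + b = 0) (a b : ℕ → B) (cF dF : ℕ → ℕ) (v' : ℕ)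
    (hb0 : b 0 = a 0) (hbs : ∀ r, b (r + 1) = a (r + 1) + a r)
    (hc : cF v' = 1) (hd : dF v' = 1)
    (hpas : ∀ r < v', (cF r + cF (r + 1)) % 2 = dF r % 2) :
    ∑ r ∈ range (v' + 1), cF r • b r = ∑ r ∈ range (v' + 1), dF r • a r := by
  rw [Finset.sum_range_succ' (fun r => cF r • b r)]
  calc (∑ r ∈ range v', cF (r + 1) • b (r + 1)) + cF 0 • b 0
      = (∑ r ∈ range v', (cF (r + 1) • a (r + 1) + cF (r + 1) • a r)) + cF 0 • a 0 := by
        rw [hb0]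
        congr 1
        exact sum_congr rfl fun r _ => by rw [hbs r, smul_add]
    _ = ((∑ r ∈ range v', cF (r + 1) • a (r + 1)) + cF 0 • a 0)
          + ∑ r ∈ range v', cF (r + 1) • a r := by
        rw [sum_add_distrib]; abel
    _ = (∑ r ∈ range (v' + 1), cF r • a r) + ∑ r ∈ range v', cF (r + 1) • a r := by
        rw [Finset.sum_range_succ' (fun r => cF r • a r)]
    _ = ((∑ r ∈ range v', cF r • a r) + ∑ r ∈ range v', cF (r + 1) • a r) + a v' := by
        rw [Finset.sum_range_succ, hc, one_smul]; abel
    _ = (∑ r ∈ range v', (cF r + cF (r + 1)) • a r) + a v' := by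
        rw [← sum_add_distrib]
        congr 1
        exact sum_congr rfl fun r _ => (add_nsmul _ _ _).symm
    _ = (∑ r ∈ range v', dF r • a r) + dF v' • a v' := by
        rw [hd, one_smul]
        congr 1
        exact sum_congr rfl fun r hr => smul_parity hB (hpas r (mem_range.mp hr)) _
    _ = ∑ r ∈ range (v' + 1), dF r • a r := (Finset.sum_range_succ _ _).symm

end DecompAux

namespace DecompAux

lemma main_aux {A B : Type*} [Fintype A] [DecidableEq A] [AddCommGroup B]
    (hB : ∀ b : B, b + b = 0) (φ : Finset A → B) :
    ∀ (t : ℕ) {n : ℕ} (x : Fin n → A) (K : Finset (Fin n)),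
      K.card = Fintype.card A + 2 * t + 1 →
      ∑ r ∈ range ((Fintype.card A + 1) / 2),
        ((Fintype.card A + 1) / 2 + t - 1 - r).choose t
          • auxH φ x K ((Fintype.card A + 1) % 2 + 2 * r)
        = φ (oddsuppOn K x) := by
  intro t
  induction t with
  | zero =>
    intro n x K hK
    set c := Fintype.card A with hc
    set v := (c + 1) / 2 with hv_def
    set ρ := (c + 1) % 2 with hρ_def
    -- setup
    have hKpos : 0 < K.card := by omega
    obtain ⟨j₀, hj₀⟩ := card_pos.mp hKpos
    have hA : 0 < c := Fintype.card_pos_iff.mpr ⟨x j₀⟩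
    obtain ⟨v', hv'⟩ : ∃ v', v = v' + 1 := ⟨v - 1, by omega⟩
    obtain ⟨j, hjK, j', hj'K, hne, hxx⟩ :=
      Finset.exists_ne_map_eq_of_card_lt_of_maps_to (s := K) (t := (univ : Finset A))
        (by rw [card_univ]; omega) (fun a _ => mem_univ (x a))
    have hj'mem : j' ∈ K.erase j := mem_erase.mpr ⟨fun h => hne h.symm, hj'K⟩
    obtain ⟨K', hK'_def⟩ : ∃ K'', K'' = (K.erase j).erase j' := ⟨_, rfl⟩
    have hK'card : K'.card = c - 1 := by
      rw [hK'_def, card_erase_of_mem hj'mem, card_erase_of_mem hjK]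
      omega
    have hjK' : j ∉ K' := by
      rw [hK'_def]
      exact fun h => notMem_erase j K (mem_of_mem_erase h)
    have hj'K' : j' ∉ K' := by
      rw [hK'_def]
      exact notMem_erase j' _
    have hKeq : K = insert j (insert j' K') := by
      rw [hK'_def, insert_erase hj'mem, insert_erase hjK]
    have hOdd : oddsuppOn K x = oddsuppOn K' x := by
      conv_lhs => rw [hKeq]
      exact oddsuppOn_insert_pair hxx hne hjK' hj'K'
    have hb0' : auxH φ x K (ρ + 2 * 0) = auxH φ x K' (ρ + 2 * 0) := by
      have h := sum_pair_split hB φ x hjK hj'K hne hxx (ρ + 2 * 0)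
      rw [sum_pair_both_small φ x hne (by omega), add_zero, ← hK'_def] at h
      exact h
    have hbs : ∀ r, auxH φ x K (ρ + 2 * (r + 1))
        = auxH φ x K' (ρ + 2 * (r + 1)) + auxH φ x K' (ρ + 2 * r) := by
      intro r
      have h := sum_pair_split hB φ x hjK hj'K hne hxx (ρ + 2 * (r + 1))
      have h2 := sum_pair_both φ x hjK hj'K hne hxx (ρ + 2 * r)
      rw [show (ρ + 2 * r) + 2 = ρ + 2 * (r + 1) from by ring] at h2
      rw [h2, ← hK'_def] at h
      exact h
    have hfin : auxH φ x K' (ρ + 2 * v') = φ (oddsuppOn K x) := by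
      have hcc : ρ + 2 * v' = K'.card := by omega
      rw [hcc]
      unfold auxH
      rw [powersetCard_self, sum_singleton, hOdd]
    calc ∑ r ∈ range v, (v + 0 - 1 - r).choose 0 • auxH φ x K (ρ + 2 * r)
        = ∑ r ∈ range (v' + 1), auxH φ x K (ρ + 2 * r) := by
          rw [← hv']
          exact sum_congr rfl fun r _ => by rw [Nat.choose_zero_right, one_smul]
      _ = (∑ r ∈ range v', auxH φ x K (ρ + 2 * (r + 1))) + auxH φ x K (ρ + 2 * 0) :=
          Finset.sum_range_succ' (fun r => auxH φ x K (ρ + 2 * r)) v'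
      _ = (∑ r ∈ range v', (auxH φ x K' (ρ + 2 * (r + 1)) + auxH φ x K' (ρ + 2 * r)))
            + auxH φ x K' (ρ + 2 * 0) := by
          rw [hb0']
          congr 1
          exact sum_congr rfl fun r _ => hbs r
      _ = ((∑ r ∈ range v', auxH φ x K' (ρ + 2 * (r + 1)))
            + ∑ r ∈ range v', auxH φ x K' (ρ + 2 * r)) + auxH φ x K' (ρ + 2 * 0) := by
          rw [sum_add_distrib]
      _ = auxH φ x K' (ρ + 2 * v') := tele hB (fun m => auxH φ x K' (ρ + 2 * m)) v'
      _ = φ (oddsuppOn K x) := hfin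
  | succ t' ih =>
    intro n x K hK
    set c := Fintype.card A with hc
    set v := (c + 1) / 2 with hv_def
    set ρ := (c + 1) % 2 with hρ_def
    have hKpos : 0 < K.card := by omega
    obtain ⟨j₀, hj₀⟩ := card_pos.mp hKpos
    have hA : 0 < c := Fintype.card_pos_iff.mpr ⟨x j₀⟩
    obtain ⟨v', hv'⟩ : ∃ v', v = v' + 1 := ⟨v - 1, by omega⟩
    obtain ⟨j, hjK, j', hj'K, hne, hxx⟩ :=
      Finset.exists_ne_map_eq_of_card_lt_of_maps_to (s := K) (t := (univ : Finset A))
        (by rw [card_univ]; omega) (fun a _ => mem_univ (x a))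
    have hj'mem : j' ∈ K.erase j := mem_erase.mpr ⟨fun h => hne h.symm, hj'K⟩
    obtain ⟨K', hK'_def⟩ : ∃ K'', K'' = (K.erase j).erase j' := ⟨_, rfl⟩
    have hK'card : K'.card = c + 2 * t' + 1 := by
      rw [hK'_def, card_erase_of_mem hj'mem, card_erase_of_mem hjK]
      omega
    have hjK' : j ∉ K' := by
      rw [hK'_def]
      exact fun h => notMem_erase j K (mem_of_mem_erase h)
    have hj'K' : j' ∉ K' := by
      rw [hK'_def]
      exact notMem_erase j' _
    have hKeq : K = insert j (insert j' K') := by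
      rw [hK'_def, insert_erase hj'mem, insert_erase hjK]
    have hOdd : oddsuppOn K x = oddsuppOn K' x := by
      conv_lhs => rw [hKeq]
      exact oddsuppOn_insert_pair hxx hne hjK' hj'K'
    have hb0' : auxH φ x K (ρ + 2 * 0) = auxH φ x K' (ρ + 2 * 0) := by
      have h := sum_pair_split hB φ x hjK hj'K hne hxx (ρ + 2 * 0)
      rw [sum_pair_both_small φ x hne (by omega), add_zero, ← hK'_def] at h
      exact h
    have hbs : ∀ r, auxH φ x K (ρ + 2 * (r + 1))
        = auxH φ x K' (ρ + 2 * (r + 1)) + auxH φ x K' (ρ + 2 * r) := by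
      intro r
      have h := sum_pair_split hB φ x hjK hj'K hne hxx (ρ + 2 * (r + 1))
      have h2 := sum_pair_both φ x hjK hj'K hne hxx (ρ + 2 * r)
      rw [show (ρ + 2 * r) + 2 = ρ + 2 * (r + 1) from by ring] at h2
      rw [h2, ← hK'_def] at h
      exact h
    have ihK' := ih x K' (by omega)
    calc ∑ r ∈ range v, (v + (t' + 1) - 1 - r).choose (t' + 1) • auxH φ x K (ρ + 2 * r)
        = ∑ r ∈ range (v' + 1), (v + t' - r).choose (t' + 1) • auxH φ x K (ρ + 2 * r) := by
          rw [← hv']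
          exact sum_congr rfl fun r _ => by
            rw [show v + (t' + 1) - 1 - r = v + t' - r from by omega]
      _ = ∑ r ∈ range (v' + 1), (v + t' - 1 - r).choose t' • auxH φ x K' (ρ + 2 * r) := by
          refine step_alg hB (fun m => auxH φ x K' (ρ + 2 * m)) (fun m => auxH φ x K (ρ + 2 * m))
            (fun r => (v + t' - r).choose (t' + 1)) (fun r => (v + t' - 1 - r).choose t') v'
            hb0' hbs ?_ ?_ ?_
          · show (v + t' - v').choose (t' + 1) = 1
            rw [show v + t' - v' = t' + 1 from by omega, Nat.choose_self]
          · show (v + t' - 1 - v').choose t' = 1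
            rw [show v + t' - 1 - v' = t' from by omega, Nat.choose_self]
          · intro r hr
            show ((v + t' - r).choose (t' + 1) + (v + t' - (r + 1)).choose (t' + 1)) % 2
              = ((v + t' - 1 - r).choose t') % 2
            rw [show v + t' - r = (v + t' - 1 - r) + 1 from by omega,
              show v + t' - (r + 1) = v + t' - 1 - r from by omega,
              Nat.choose_succ_succ]
            simp only [Nat.succ_eq_add_one]
            omega
      _ = φ (oddsuppOn K' x) := by rw [← hv']; exact ihK'
      _ = φ (oddsuppOn K x) := hOdd ▸ rfl

end DecompAux

namespace DecompAux

lemma bridge {A B : Type*} [Fintype A] [DecidableEq A] [AddCommGroup B] {n t : ℕ}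
    (hn : n = Fintype.card A + 2 * t + 1) (φ : Finset A → B) (x : Fin n → A) :
    decompOdd t φ x = ∑ r ∈ range ((Fintype.card A + 1) / 2),
      ((Fintype.card A + 1) / 2 + t - 1 - r).choose t
        • auxH φ x univ ((Fintype.card A + 1) % 2 + 2 * r) := by
  set c := Fintype.card A with hc
  set v := (c + 1) / 2 with hv_def
  set ρ := (c + 1) % 2 with hρ_def
  have hn2 : n / 2 = v + t := by omega
  unfold decompOdd auxH
  rw [hn2]
  refine Finset.sum_nbij' (fun i => v + t - i) (fun r => v + t - r) ?_ ?_ ?_ ?_ ?_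
  · intro i hi
    simp only [mem_Icc] at hi
    simp only [mem_range]
    omega
  · intro r hr
    simp only [mem_range] at hr
    simp only [mem_Icc]
    omega
  · intro i hi
    simp only [mem_Icc] at hi
    show v + t - (v + t - i) = i
    omega
  · intro r hr
    simp only [mem_range] at hr
    show v + t - (v + t - r) = r
    omega
  · intro i hi
    simp only [mem_Icc] at hi
    have hset : Finset.univ.filter (fun I : Finset (Fin n) => I.card = n - 2 * i)
        = powersetCard (n - 2 * i) univ := by
      rw [powersetCard_eq_filter, powerset_univ]
    rw [hset, ← Finset.smul_sum]
    rw [show v + t - 1 - (v + t - i) = i - 1 from by omega,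
        show ρ + 2 * (v + t - i) = n - 2 * i from by omega]

lemma exists_oddsupp_eq {A : Type*} [Fintype A] [DecidableEq A] {n : ℕ} (hA : Nonempty A)
    (S : Finset A) (hSn : S.card ≤ n) (hpar : S.card % 2 = n % 2) :
    ∃ x : Fin n → A, oddsupp x = S := by
  rcases S.eq_empty_or_nonempty with rfl | hSne
  · obtain ⟨a₀⟩ := hA
    refine ⟨fun _ => a₀, ?_⟩
    ext a
    rw [show oddsupp (fun _ : Fin n => a₀) = oddsuppOn univ (fun _ : Fin n => a₀) from rfl,
      mem_oddsuppOn_iff]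
    simp only [notMem_empty, iff_false, filter_const]
    split_ifs with h
    · rw [card_univ, Fintype.card_fin, Nat.odd_iff]
      simp only [card_empty] at hpar
      omega
    · simp
  · set k := S.card with hk_def
    have hk1 : 1 ≤ k := card_pos.mpr hSne
    set σ : Fin k → A := fun i => (S.equivFin.symm i : A) with hσ_def
    have hσS : ∀ i, σ i ∈ S := fun i => (S.equivFin.symm i).2
    have hσinj : Function.Injective σ :=
      Subtype.val_injective.comp (S.equivFin.symm.injective)
    set a₀ : A := σ ⟨0, hk1⟩ with ha₀_def
    have ha₀S : a₀ ∈ S := hσS _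
    set x : Fin n → A := fun j => if h : (j : ℕ) < k then σ ⟨j, h⟩ else a₀ with hx_def
    have hxlt : ∀ (j : Fin n) (h : (j : ℕ) < k), x j = σ ⟨j, h⟩ := fun j h => dif_pos h
    have hxge : ∀ (j : Fin n), ¬ (j : ℕ) < k → x j = a₀ := fun j h => dif_neg h
    have hklt : ((univ : Finset (Fin n)).filter fun j : Fin n => (j : ℕ) < k).card = k := by
      have hb : ((univ : Finset (Fin n)).filter fun j : Fin n => (j : ℕ) < k).card
          = (univ : Finset (Fin k)).card :=
        Finset.card_bij' (fun j hj => (⟨(j : ℕ), (mem_filter.mp hj).2⟩ : Fin k))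
          (fun i _ => (⟨(i : ℕ), lt_of_lt_of_le i.isLt hSn⟩ : Fin n))
          (fun j hj => mem_univ _)
          (fun i _ => mem_filter.mpr ⟨mem_univ _, i.isLt⟩)
          (fun j hj => rfl) (fun i _ => rfl)
      rw [hb, card_univ, Fintype.card_fin]
    have hc1 : ∀ a, ((univ : Finset (Fin n)).filter fun j => x j = a ∧ (j : ℕ) < k).card
        = if a ∈ S then 1 else 0 := by
      intro a
      split_ifs with ha
      · rw [card_eq_one]
        set i₀ : Fin k := S.equivFin ⟨a, ha⟩ with hi₀_def
        have hσa : σ i₀ = a := by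
          show ((S.equivFin.symm (S.equivFin ⟨a, ha⟩)) : A) = a
          rw [Equiv.symm_apply_apply]
        refine ⟨⟨(i₀ : ℕ), lt_of_lt_of_le i₀.isLt hSn⟩, ?_⟩
        ext j
        simp only [mem_filter, mem_singleton, mem_univ, true_and]
        constructor
        · rintro ⟨hxa, hjk⟩
          have h1 : σ ⟨(j : ℕ), hjk⟩ = σ i₀ := by rw [hσa, ← hxa, hxlt j hjk]
          have h2 := hσinj h1
          have h3 : (j : ℕ) = (i₀ : ℕ) := congrArg Fin.val h2
          exact Fin.ext h3
        · rintro rfl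
          refine ⟨?_, i₀.isLt⟩
          rw [hxlt _ i₀.isLt]
          rw [← hσa]
      · rw [card_eq_zero, filter_eq_empty_iff]
        rintro j - ⟨hxa, hjk⟩
        rw [hxlt j hjk] at hxa
        exact ha (hxa ▸ hσS _)
    have hc2 : ∀ a, ((univ : Finset (Fin n)).filter fun j => x j = a ∧ ¬ (j : ℕ) < k).card
        = if a = a₀ then n - k else 0 := by
      intro a
      split_ifs with ha
      · have heq : ((univ : Finset (Fin n)).filter fun j => x j = a ∧ ¬ (j : ℕ) < k)
            = (univ : Finset (Fin n)).filter fun j : Fin n => ¬ (j : ℕ) < k := by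
          refine filter_congr fun j _ => ?_
          constructor
          · exact fun h => h.2
          · exact fun h => ⟨by rw [hxge j h, ha], h⟩
        rw [heq]
        have := card_filter_add_card_filter_not
          (s := (univ : Finset (Fin n))) (p := fun j : Fin n => (j : ℕ) < k)
        rw [hklt, card_univ, Fintype.card_fin] at this
        omega
      · rw [card_eq_zero, filter_eq_empty_iff]
        rintro j - ⟨hxa, hjk⟩
        rw [hxge j hjk] at hxa
        exact ha hxa.symm
    refine ⟨x, ?_⟩
    ext a
    rw [show oddsupp x = oddsuppOn univ x from rfl, mem_oddsuppOn_iff]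
    have hsplit : ((univ : Finset (Fin n)).filter fun j => x j = a).card
        = (if a ∈ S then 1 else 0) + (if a = a₀ then n - k else 0) := by
      rw [← hc1 a, ← hc2 a]
      have := card_filter_add_card_filter_not
        (s := (univ : Finset (Fin n)).filter fun j => x j = a) (p := fun j : Fin n => (j : ℕ) < k)
      rw [filter_filter, filter_filter] at this
      omega
    rw [hsplit, Nat.odd_iff]
    by_cases haS : a ∈ S
    · rw [if_pos haS]
      by_cases haa : a = a₀
      · rw [if_pos haa, iff_true_intro haS, iff_true]
        omega
      · rw [if_neg haa, iff_true_intro haS, iff_true]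
    · have haa : a ≠ a₀ := fun h => haS (by rw [h]; exact ha₀S)
      rw [if_neg haS, if_neg haa, iff_false_intro haS, iff_false]
      omega

end DecompAux

theorem decomposition_odd_case {A B : Type*} [Fintype A] [DecidableEq A]
    [AddCommGroup B] [Finite B] (hB : ∀ b : B, b + b = 0) {n t : ℕ}
    (hn : n = Fintype.card A + 2 * t + 1) (f : (Fin n → A) → B) :
    (DeterminedByOddsupp f ↔
      ∃ φ : Finset A → B, ∀ x : Fin n → A, f x = decompOdd t φ x) ∧
    (∀ φ₁ φ₂ : Finset A → B,
      (∀ x : Fin n → A, f x = decompOdd t φ₁ x) →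
      (∀ x : Fin n → A, f x = decompOdd t φ₂ x) →
      ∀ S : Finset A, S.card ≤ n → S.card % 2 = n % 2 → φ₁ S = φ₂ S) := by
  have hcardu : (univ : Finset (Fin n)).card = Fintype.card A + 2 * t + 1 := by
    rw [card_univ, Fintype.card_fin]; exact hn
  have key : ∀ (φ : Finset A → B) (x : Fin n → A), decompOdd t φ x = φ (oddsupp x) := by
    intro φ x
    rw [DecompAux.bridge hn φ x, DecompAux.main_aux hB φ t x univ hcardu]
    rfl
  refine ⟨⟨?_, ?_⟩, ?_⟩
  · rintro ⟨ψ, hψ⟩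
    exact ⟨ψ, fun x => by rw [hψ x, key ψ x]⟩
  · rintro ⟨ψ, hψ⟩
    exact ⟨ψ, fun x => by rw [hψ x, key ψ x]⟩
  · intro φ₁ φ₂ h1 h2 S hS hSpar
    have hA : Nonempty A := by
      by_contra hA
      have hc0 : Fintype.card A = 0 := Fintype.card_eq_zero_iff.mpr (not_nonempty_iff.mp hA)
      have hS0 : S.card ≤ Fintype.card A := by
        calc S.card ≤ (univ : Finset A).card := card_le_univ S
          _ = Fintype.card A := card_univ
      omega
    obtain ⟨x, hx⟩ := DecompAux.exists_oddsupp_eq hA S hS hSpar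
    rw [← hx, ← key φ₁ x, ← key φ₂ x, ← h1 x, ← h2 x]
end

section
/- Let B be a finite Boolean group, A a finite set with a distinguished element 0, and f : A^n → B with n − |A| = 2t > 0. Then f is determined by oddsupp if and only if there is a map φ from subsets of A to B satisfying φ(S) = φ(S △ {0}) for every S ⊆ A (△ denoting symmetric difference), such that for all x ∈ A^n, f(x) = Σ_{i=t+1}^{⌊n/2⌋} Σ_{I ⊆ [n], |I| = n−2i} C(i−1, t) · Θ_φ(x|_I) + Σ_{k=t+1}^{⌊(n+1)/2⌋} Σ_{K ⊆ [n], |K| = n−2k+1} C(2k−1, 2t) · Θ_φ(x|_K), where C(r, s) · b denotes the C(r, s)-fold sum b + ⋯ + b in B. Moreover, such a map φ is uniquely determined by f. -/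
open Finset

/-- The canonical symmetric decomposition formula in the even case. -/
def decompEven {A B : Type*} [DecidableEq A] [AddCommMonoid B] {n : ℕ} (t : ℕ)
    (φ : Finset A → B) (x : Fin n → A) : B :=
  (∑ i ∈ Finset.Icc (t + 1) (n / 2),
    ∑ I ∈ Finset.univ.filter (fun I : Finset (Fin n) => I.card = n - 2 * i),
      Nat.choose (i - 1) t • φ (oddsuppOn I x)) +
  ∑ k ∈ Finset.Icc (t + 1) ((n + 1) / 2),
    ∑ K ∈ Finset.univ.filter (fun K : Finset (Fin n) => K.card = n + 1 - 2 * k),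
      Nat.choose (2 * k - 1) (2 * t) • φ (oddsuppOn K x)


-- === auxiliary development ===

private lemma lucas2 (a b : ℕ) : (2*a+1).choose (2*b) ≡ a.choose b [MOD 2] := by
  have h := @Choose.choose_modEq_choose_mod_mul_choose_div_nat (2*a+1) (2*b) 2 ⟨Nat.prime_two⟩
  have h1 : (2*a+1) % 2 = 1 := by omega
  have h2 : (2*b) % 2 = 0 := by omega
  have h3 : (2*a+1)/2 = a := by omega
  have h4 : (2*b)/2 = b := by omega
  rw [h1, h2, h3, h4] at h
  simpa using h

private def gfun (t v : ℕ) : ℕ := (v/2).choose t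

private def GN (t q w : ℕ) : ℕ := ∑ k ∈ Finset.range (q+1), q.choose k * gfun t (w - k)

private lemma GN_rec (t q w : ℕ) : GN t (q+1) w = GN t q w + GN t q (w-1) := by
  unfold GN
  rw [Finset.sum_range_succ' _ (q+1)]
  have h1 : ∀ k, (q+1).choose (k+1) * gfun t (w-(k+1))
      = q.choose k * gfun t ((w-1)-k) + q.choose (k+1) * gfun t (w-(k+1)) := by
    intro k
    have e : w - (k+1) = (w-1) - k := by omega
    rw [Nat.choose_succ_succ, add_mul, e]
  rw [Finset.sum_congr rfl (fun k _ => h1 k), Finset.sum_add_distrib]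
  have h2 : ∑ k ∈ Finset.range (q+1), q.choose (k+1) * gfun t (w-(k+1))
      = ∑ k ∈ Finset.range q, q.choose (k+1) * gfun t (w-(k+1)) := by
    rw [Finset.sum_range_succ, Nat.choose_succ_self, zero_mul, add_zero]
  rw [h2]
  have h3 : ∑ k ∈ Finset.range (q+1), q.choose k * gfun t (w - k)
      = ∑ k ∈ Finset.range q, q.choose (k+1) * gfun t (w-(k+1))
      + q.choose 0 * gfun t (w - 0) := Finset.sum_range_succ' _ q
  rw [h3]
  simp only [Nat.choose_zero_right, Nat.sub_zero, one_mul]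
  have h4 : ∀ k, gfun t (w - 1 - k) = gfun t ((w-1) - k) := fun k => rfl
  ring

private lemma gstep (t v : ℕ) :
    gfun (t+1) (v+2) + gfun (t+1) v = gfun t v + 2 * ((v/2).choose (t+1)) := by
  unfold gfun
  have e : (v+2)/2 = v/2 + 1 := by omega
  rw [e, Nat.choose_succ_succ]
  ring

private lemma GG (t q w : ℕ) (hqw : q ≤ w) :
    ∃ j, GN (t+1) (q+2) (w+2) = GN t q w + 2 * j := by
  have h1 : GN (t+1) (q+2) (w+2)
      = GN (t+1) q (w+2) + GN (t+1) q w + 2 * GN (t+1) q (w+1) := by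
    rw [GN_rec, GN_rec, GN_rec]
    have e1 : w + 2 - 1 = w + 1 := by omega
    have e2 : w + 1 - 1 = w := by omega
    rw [e1, e2]; ring
  have h2 : GN (t+1) q (w+2) + GN (t+1) q w
      = GN t q w + 2 * ∑ k ∈ Finset.range (q+1), q.choose k * (((w-k)/2).choose (t+1)) := by
    unfold GN
    rw [← Finset.sum_add_distrib, Finset.mul_sum, ← Finset.sum_add_distrib]
    refine Finset.sum_congr rfl fun k hk => ?_
    have hk' : k ≤ q := by simpa [Nat.lt_succ_iff] using Finset.mem_range.mp hk
    have e : w + 2 - k = (w - k) + 2 := by omega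
    rw [e, ← mul_add, gstep]
    ring
  refine ⟨(∑ k ∈ Finset.range (q+1), q.choose k * (((w-k)/2).choose (t+1)))
    + GN (t+1) q (w+1), ?_⟩
  rw [h1, h2]; ring

private lemma Gbase_val (t q : ℕ) (ht : 1 ≤ t) : GN t q (2*t) = 1 := by
  unfold GN
  rw [Finset.sum_eq_single 0]
  · simp [gfun, Nat.mul_div_cancel_left, Nat.choose_self]
  · intro k hk hk0
    have : (2*t - k)/2 < t := by omega
    simp [gfun, Nat.choose_eq_zero_of_lt this]
  · intro h; simp at h

private lemma Gzero (w : ℕ) : GN 0 1 w = 2 := by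
  unfold GN
  simp [gfun, Finset.sum_range_succ]

private lemma Bt : ∀ t, 1 ≤ t → ∀ w, 2*t ≤ w →
    (GN t (2*t+1) w : ZMod 2) = if w = 2*t then 1 else 0 := by
  intro t
  induction t with
  | zero => omega
  | succ t ih =>
    intro _ w hw
    rcases Nat.eq_or_lt_of_le hw with h | h
    · rw [← h, if_pos rfl, Gbase_val _ _ (by omega), Nat.cast_one]
    · rw [if_neg (by omega)]
      obtain ⟨w', rfl⟩ : ∃ w', w = w' + 2 := ⟨w - 2, by omega⟩
      rcases Nat.eq_zero_or_pos t with rfl | ht'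
      · -- t+1 = 1, use Gzero
        obtain ⟨j, hj⟩ := GG 0 1 w' (by omega)
        have e : 2*(0+1)+1 = 1 + 2 := by norm_num
        rw [e, hj, Gzero]
        push_cast
        have h2 : (2 : ZMod 2) = 0 := by decide
        rw [h2]; ring
      · obtain ⟨j, hj⟩ := GG t (2*t+1) w' (by omega)
        have e : 2*(t+1)+1 = (2*t+1) + 2 := by ring
        rw [e, hj, Nat.cast_add, ih ht' w' (by omega), if_neg (by omega)]
        push_cast
        have h2 : (2 : ZMod 2) = 0 := by decide
        rw [h2]; ring

private lemma Gmain (t : ℕ) (ht : 1 ≤ t) : ∀ q, 2*t ≤ q → ∀ w, q ≤ w →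
    (GN t (q+1) w : ZMod 2) = if w = q then 1 else 0 := by
  intro q
  induction q with
  | zero => omega
  | succ q ih =>
    intro hq w hw
    rcases Nat.eq_or_lt_of_le hq with h | h
    · exact h ▸ Bt t ht w (h ▸ hw)
    · have hq' : 2*t ≤ q := by omega
      rw [GN_rec, Nat.cast_add, ih hq' w (by omega), ih hq' (w-1) (by omega),
        if_neg (by omega)]
      by_cases hwq : w = q + 1
      · rw [if_pos (by omega), if_pos hwq]; ring
      · rw [if_neg (by omega), if_neg hwq]; ring

section Infra
variable {A : Type*} [DecidableEq A]

private lemma mem_oddsuppOn {n : ℕ} {I : Finset (Fin n)} {x : Fin n → A} {a : A} :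
    a ∈ oddsuppOn I x ↔ Odd ((I.filter fun j => x j = a).card) := by
  unfold oddsuppOn
  simp only [Finset.mem_filter, Finset.mem_image]
  constructor
  · rintro ⟨-, h⟩; exact h
  · intro h
    refine ⟨?_, h⟩
    have hpos : 0 < (I.filter fun j => x j = a).card := by
      rcases h with ⟨c, hc⟩; omega
    obtain ⟨j, hj⟩ := Finset.card_pos.mp hpos
    rw [Finset.mem_filter] at hj
    exact ⟨j, hj.1, hj.2⟩

private lemma oddsuppOn_congr {n : ℕ} {I : Finset (Fin n)} {x y : Fin n → A}
    (h : ∀ j ∈ I, x j = y j) : oddsuppOn I x = oddsuppOn I y := by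
  ext a
  rw [mem_oddsuppOn, mem_oddsuppOn]
  have he : I.filter (fun j => x j = a) = I.filter (fun j => y j = a) :=
    Finset.filter_congr fun j hj => by rw [h j hj]
  rw [he]

private lemma cnt_insert {n : ℕ} {J : Finset (Fin n)} {u : Fin n} (hu : u ∉ J)
    (p : Fin n → Prop) [DecidablePred p] :
    ((insert u J).filter p).card = (J.filter p).card + if p u then 1 else 0 := by
  rw [Finset.filter_insert]
  split
  · rw [Finset.card_insert_of_notMem (fun hc => hu (Finset.mem_of_mem_filter _ hc))]
  · rw [add_zero]

private lemma oddsuppOn_pair_collapse {n : ℕ} {J : Finset (Fin n)} {u v : Fin n}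
    {x : Fin n → A} (huv : u ≠ v) (hu : u ∉ J) (hv : v ∉ J) (hx : x u = x v) :
    oddsuppOn (insert u (insert v J)) x = oddsuppOn J x := by
  ext a
  rw [mem_oddsuppOn, mem_oddsuppOn]
  have hu' : u ∉ insert v J := by simp [huv, hu]
  rw [cnt_insert hu', cnt_insert hv]
  by_cases h : x v = a
  · rw [if_pos h, if_pos (hx.trans h)]
    rw [Nat.odd_iff, Nat.odd_iff]; omega
  · rw [if_neg h, if_neg (fun hc => h (hx ▸ hc))]
    simp

private lemma oddsuppOn_swap {n : ℕ} {J : Finset (Fin n)} {u v : Fin n}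
    {x : Fin n → A} (hu : u ∉ J) (hv : v ∉ J) (hx : x u = x v) :
    oddsuppOn (insert u J) x = oddsuppOn (insert v J) x := by
  ext a
  rw [mem_oddsuppOn, mem_oddsuppOn, cnt_insert hu, cnt_insert hv]
  have : (if x u = a then 1 else 0) = (if x v = a then 1 else 0) := by rw [hx]
  rw [this]
end Infra


section Bool
variable {B : Type*} [AddCommGroup B]

private lemma bool_smul_mod (hB : ∀ b : B, b + b = 0) (k : ℕ) (b : B) :
    k • b = (k % 2) • b := by
  have h2 : ∀ c : B, (2:ℕ) • c = 0 := fun c => by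
    rw [two_smul]; exact hB c
  conv_lhs => rw [← Nat.div_add_mod k 2]
  rw [add_smul, mul_smul, h2, zero_add]

private lemma bool_smul_congr (hB : ∀ b : B, b + b = 0) {k l : ℕ}
    (h : k % 2 = l % 2) (b : B) : k • b = l • b := by
  rw [bool_smul_mod hB, h, ← bool_smul_mod hB]

private lemma bool_eq_of_add_eq_zero (hB : ∀ b : B, b + b = 0) {a b : B}
    (h : a + b = 0) : a = b :=
  add_right_cancel (h.trans (hB b).symm)

private lemma coeff_lemma (hB : ∀ b : B, b + b = 0) {t : ℕ} (ht : 1 ≤ t)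
    (n m : ℕ) (hm : m ≤ n) (b : B) :
    (∑ i ∈ Finset.Icc (t+1) (n/2), if m = n - 2*i then (i-1).choose t • b else 0)
    + (∑ k ∈ Finset.Icc (t+1) ((n+1)/2),
        if m = n + 1 - 2*k then (2*k-1).choose (2*t) • b else 0)
    = gfun t (n - 1 - m) • b := by
  have e1 : (∑ i ∈ Finset.Icc (t+1) (n/2), if m = n - 2*i then (i-1).choose t • b else 0)
      = if (n-m) % 2 = 0 ∧ 2*t+2 ≤ n-m then (((n-m)/2-1).choose t) • b else 0 := by
    split
    case isTrue h =>
      have hmem : (n-m)/2 ∈ Finset.Icc (t+1) (n/2) := by rw [Finset.mem_Icc]; omega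
      rw [Finset.sum_eq_single_of_mem _ hmem ?_, if_pos (by omega)]
      intro i hi hne
      rw [Finset.mem_Icc] at hi
      rw [if_neg (by omega)]
    case isFalse h =>
      refine Finset.sum_eq_zero fun i hi => ?_
      rw [Finset.mem_Icc] at hi
      rw [if_neg (by omega)]
  have e2 : (∑ k ∈ Finset.Icc (t+1) ((n+1)/2),
        if m = n + 1 - 2*k then (2*k-1).choose (2*t) • b else 0)
      = if (n+1-m) % 2 = 0 ∧ 2*t+2 ≤ n+1-m
          then ((2*((n+1-m)/2)-1).choose (2*t)) • b else 0 := by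
    split
    case isTrue h =>
      have hmem : (n+1-m)/2 ∈ Finset.Icc (t+1) ((n+1)/2) := by rw [Finset.mem_Icc]; omega
      rw [Finset.sum_eq_single_of_mem _ hmem ?_, if_pos (by omega)]
      intro i hi hne
      rw [Finset.mem_Icc] at hi
      rw [if_neg (by omega)]
    case isFalse h =>
      refine Finset.sum_eq_zero fun i hi => ?_
      rw [Finset.mem_Icc] at hi
      rw [if_neg (by omega)]
  rw [e1, e2]
  by_cases h1 : (n-m) % 2 = 0 ∧ 2*t+2 ≤ n-m
  · rw [if_pos h1, if_neg (by omega), add_zero]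
    have : (n-m)/2 - 1 = (n-1-m)/2 := by omega
    rw [this]; rfl
  · rw [if_neg h1]
    by_cases h2 : (n+1-m) % 2 = 0 ∧ 2*t+2 ≤ n+1-m
    · rw [if_pos h2, zero_add]
      refine bool_smul_congr hB ?_ b
      have e3 : 2*((n+1-m)/2)-1 = 2*((n-1-m)/2)+1 := by omega
      rw [e3]
      have := lucas2 ((n-1-m)/2) t
      exact this
    · rw [if_neg h2, zero_add]
      have : gfun t (n-1-m) = 0 := by
        unfold gfun
        exact Nat.choose_eq_zero_of_lt (by omega)
      rw [this, zero_smul]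

private lemma decomp_eq {A : Type*} [Fintype A] [DecidableEq A]
    (hB : ∀ b : B, b + b = 0) {n t : ℕ} (ht : 1 ≤ t)
    (φ : Finset A → B) (x : Fin n → A) :
    decompEven t φ x = ∑ I : Finset (Fin n), gfun t (n - 1 - I.card) • φ (oddsuppOn I x) := by
  unfold decompEven
  simp only [Finset.sum_filter]
  rw [Finset.sum_comm (s := Finset.Icc (t+1) (n/2)),
    Finset.sum_comm (s := Finset.Icc (t+1) ((n+1)/2)), ← Finset.sum_add_distrib]
  refine Finset.sum_congr rfl fun I _ => ?_
  have hcard : I.card ≤ n := by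
    have := Finset.card_le_univ I
    simpa using this
  exact coeff_lemma hB ht n I.card hcard _

end Bool


section Main
variable {A B : Type*} [Fintype A] [DecidableEq A] [Zero A] [AddCommGroup B]

private lemma phi_erase (φ : Finset A → B)
    (hφ : ∀ S, φ S = φ (symmDiff S {(0:A)})) (S : Finset A) : φ S = φ (S.erase 0) := by
  by_cases h : (0:A) ∈ S
  · rw [hφ S]
    congr 1
    ext a
    simp only [Finset.mem_symmDiff, Finset.mem_erase, Finset.mem_singleton]
    constructor
    · rintro (⟨h1, h2⟩ | ⟨rfl, h2⟩)
      · exact ⟨h2, h1⟩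
      · exact absurd h h2
    · rintro ⟨h1, h2⟩
      exact Or.inl ⟨h2, h1⟩
  · rw [Finset.erase_eq_of_notMem h]

private lemma oddsuppOn_inj_image {n : ℕ} {x : Fin n → A}
    (hinj : ∀ j k, x j ≠ 0 → x j = x k → j = k) (I : Finset (Fin n)) :
    (oddsuppOn I x).erase 0 = (I.filter fun j => x j ≠ 0).image x := by
  ext a
  simp only [Finset.mem_erase, mem_oddsuppOn, Finset.mem_image, Finset.mem_filter]
  constructor
  · rintro ⟨ha, hodd⟩
    have hpos : 0 < (I.filter fun j => x j = a).card := by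
      rcases hodd with ⟨c, hc⟩; omega
    obtain ⟨j, hj⟩ := Finset.card_pos.mp hpos
    rw [Finset.mem_filter] at hj
    exact ⟨j, ⟨hj.1, hj.2 ▸ ha⟩, hj.2⟩
  · rintro ⟨j, ⟨hjI, hj0⟩, rfl⟩
    refine ⟨hj0, ?_⟩
    have hs : I.filter (fun k => x k = x j) = {j} := by
      ext k
      simp only [Finset.mem_filter, Finset.mem_singleton]
      constructor
      · rintro ⟨hkI, hk⟩
        exact hinj k j (hk ▸ hj0) hk
      · rintro rfl; exact ⟨hjI, rfl⟩
    rw [hs, Finset.card_singleton]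
    exact odd_one

private lemma sum_eq_phi (hB : ∀ b : B, b + b = 0) {n t : ℕ}
    (hn : n = Fintype.card A + 2 * t) (ht : 0 < t)
    (φ : Finset A → B) (hφ : ∀ S : Finset A, φ S = φ (symmDiff S {(0 : A)})) :
    ∀ (N : ℕ) (x : Fin n → A), (Finset.univ.filter fun j => x j ≠ 0).card = N →
      ∑ I : Finset (Fin n), gfun t (n - 1 - I.card) • φ (oddsuppOn I x)
        = φ (oddsuppOn Finset.univ x) := by
  intro N
  induction N using Nat.strong_induction_on with
  | _ N ih =>
  intro x hN
  by_cases hex : ∃ u v : Fin n, u ≠ v ∧ x u = x v ∧ x u ≠ 0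
  · obtain ⟨u, v, huv, hxuv, hx0⟩ := hex
    set x' : Fin n → A := Function.update (Function.update x u 0) v 0 with hx'def
    have hx'v : x' v = 0 := Function.update_self v 0 _
    have hx'u : x' u = 0 := by
      rw [hx'def, Function.update_of_ne huv, Function.update_self]
    have hx'other : ∀ j, j ≠ u → j ≠ v → x' j = x j := by
      intro j hju hjv
      rw [hx'def, Function.update_of_ne hjv, Function.update_of_ne hju]
    -- (i) same oddsupp
    have hodd : oddsuppOn Finset.univ x = oddsuppOn Finset.univ x' := by
      set J : Finset (Fin n) := (Finset.univ.erase u).erase v with hJ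
      have huJ : u ∉ J := fun h => (Finset.mem_erase.mp (Finset.mem_of_mem_erase h)).1 rfl
      have hvJ : v ∉ J := fun h => (Finset.mem_erase.mp h).1 rfl
      have hvmem : v ∈ (Finset.univ : Finset (Fin n)).erase u :=
        Finset.mem_erase.mpr ⟨fun h => huv h.symm, Finset.mem_univ v⟩
      have huniv : (Finset.univ : Finset (Fin n)) = insert u (insert v J) := by
        rw [hJ, Finset.insert_erase hvmem, Finset.insert_erase (Finset.mem_univ u)]
      have huvJ : u ∉ insert v J := by
        simp only [Finset.mem_insert]
        rintro (h | h); exact huv h; exact huJ h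
      rw [huniv, oddsuppOn_pair_collapse huv huJ hvJ hxuv,
        oddsuppOn_pair_collapse huv huJ hvJ (by rw [hx'u, hx'v]),
        oddsuppOn_congr (fun j hj => (hx'other j
          (fun h => huJ (h ▸ hj)) (fun h => hvJ (h ▸ hj))).symm)]
    -- (ii) equal sums
    have hsum : ∑ I : Finset (Fin n), gfun t (n - 1 - I.card) • φ (oddsuppOn I x)
        = ∑ I : Finset (Fin n), gfun t (n - 1 - I.card) • φ (oddsuppOn I x') := by
      set F : Finset (Fin n) → B := fun I => gfun t (n - 1 - I.card) • φ (oddsuppOn I x)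
      set F' : Finset (Fin n) → B := fun I => gfun t (n - 1 - I.card) • φ (oddsuppOn I x')
      have key : ∑ I : Finset (Fin n), (F I + F' I) = 0 := by
        set g : Finset (Fin n) → Finset (Fin n) := fun I =>
          if u ∈ I then (if v ∈ I then I else insert v (I.erase u))
          else (if v ∈ I then insert u (I.erase v) else I) with hg
        -- diagonal terms vanish
        have hdiag : ∀ I : Finset (Fin n), (u ∈ I ↔ v ∈ I) → F I = F' I := by
          intro I hIuv
          by_cases hu : u ∈ I
          · have hv : v ∈ I := hIuv.mp hu
            set J : Finset (Fin n) := (I.erase u).erase v with hJ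
            have huJ : u ∉ J := fun h => (Finset.mem_erase.mp (Finset.mem_of_mem_erase h)).1 rfl
            have hvJ : v ∉ J := fun h => (Finset.mem_erase.mp h).1 rfl
            have hvmem : v ∈ I.erase u := Finset.mem_erase.mpr ⟨fun h => huv h.symm, hv⟩
            have hIJ : I = insert u (insert v J) := by
              rw [hJ, Finset.insert_erase hvmem, Finset.insert_erase hu]
            have hcongr : oddsuppOn J x = oddsuppOn J x' := oddsuppOn_congr
              (fun j hj => (hx'other j (fun h => huJ (h ▸ hj)) (fun h => hvJ (h ▸ hj))).symm)
            show gfun t (n - 1 - I.card) • φ (oddsuppOn I x)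
              = gfun t (n - 1 - I.card) • φ (oddsuppOn I x')
            rw [hIJ, oddsuppOn_pair_collapse huv huJ hvJ hxuv,
              oddsuppOn_pair_collapse huv huJ hvJ (by rw [hx'u, hx'v]), hcongr]
          · have hv : v ∉ I := fun h => hu (hIuv.mpr h)
            show gfun t (n - 1 - I.card) • φ (oddsuppOn I x)
              = gfun t (n - 1 - I.card) • φ (oddsuppOn I x')
            rw [oddsuppOn_congr (fun j hj => (hx'other j
              (fun h => hu (h ▸ hj)) (fun h => hv (h ▸ hj))).symm)]
        -- off-diagonal: g swaps and preserves the term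
        have hswap : ∀ I : Finset (Fin n), F (g I) + F' (g I) = F I + F' I := by
          intro I
          by_cases hu : u ∈ I <;> by_cases hv : v ∈ I
          · simp only [hg, if_pos hu, if_pos hv]
          · -- u ∈ I, v ∉ I
            have hgI : g I = insert v (I.erase u) := by simp only [hg, if_pos hu, if_neg hv]
            have huE : u ∉ I.erase u := Finset.notMem_erase u I
            have hvE : v ∉ I.erase u := fun h => hv (Finset.mem_of_mem_erase h)
            have hIeq : I = insert u (I.erase u) := (Finset.insert_erase hu).symm
            have hcard : (g I).card = I.card := by
              rw [hgI, Finset.card_insert_of_notMem hvE, Finset.card_erase_of_mem hu]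
              have : 0 < I.card := Finset.card_pos.mpr ⟨u, hu⟩
              omega
            have h1 : oddsuppOn (g I) x = oddsuppOn I x := by
              rw [hgI]
              conv_rhs => rw [hIeq]
              exact (oddsuppOn_swap huE hvE hxuv).symm
            have h2 : oddsuppOn (g I) x' = oddsuppOn I x' := by
              rw [hgI]
              conv_rhs => rw [hIeq]
              exact (oddsuppOn_swap huE hvE (by rw [hx'u, hx'v])).symm
            show gfun t (n - 1 - (g I).card) • φ (oddsuppOn (g I) x)
                + gfun t (n - 1 - (g I).card) • φ (oddsuppOn (g I) x')
              = gfun t (n - 1 - I.card) • φ (oddsuppOn I x)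
                + gfun t (n - 1 - I.card) • φ (oddsuppOn I x')
            rw [hcard, h1, h2]
          · -- v ∈ I, u ∉ I
            have hgI : g I = insert u (I.erase v) := by simp only [hg, if_neg hu, if_pos hv]
            have hvE : v ∉ I.erase v := Finset.notMem_erase v I
            have huE : u ∉ I.erase v := fun h => hu (Finset.mem_of_mem_erase h)
            have hIeq : I = insert v (I.erase v) := (Finset.insert_erase hv).symm
            have hcard : (g I).card = I.card := by
              rw [hgI, Finset.card_insert_of_notMem huE, Finset.card_erase_of_mem hv]
              have : 0 < I.card := Finset.card_pos.mpr ⟨v, hv⟩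
              omega
            have h1 : oddsuppOn (g I) x = oddsuppOn I x := by
              rw [hgI]
              conv_rhs => rw [hIeq]
              exact oddsuppOn_swap huE hvE hxuv
            have h2 : oddsuppOn (g I) x' = oddsuppOn I x' := by
              rw [hgI]
              conv_rhs => rw [hIeq]
              exact oddsuppOn_swap huE hvE (by rw [hx'u, hx'v])
            show gfun t (n - 1 - (g I).card) • φ (oddsuppOn (g I) x)
                + gfun t (n - 1 - (g I).card) • φ (oddsuppOn (g I) x')
              = gfun t (n - 1 - I.card) • φ (oddsuppOn I x)
                + gfun t (n - 1 - I.card) • φ (oddsuppOn I x')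
            rw [hcard, h1, h2]
          · simp only [hg, if_neg hu, if_neg hv]
        refine Finset.sum_involution (fun I _ => g I) ?_ ?_ (fun I _ => Finset.mem_univ _) ?_
        · intro I _
          show (F I + F' I) + (F (g I) + F' (g I)) = 0
          rw [hswap I]
          exact hB _
        · intro I _ hne heq
          have heq' : g I = I := heq
          by_cases hu : u ∈ I <;> by_cases hv : v ∈ I
          · exact hne (by rw [hdiag I (by tauto)]; exact hB _)
          · have : v ∈ g I := by
              simp only [hg, if_pos hu, if_neg hv]
              exact Finset.mem_insert_self v _
            rw [heq'] at this
            exact hv this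
          · have : u ∈ g I := by
              simp only [hg, if_neg hu, if_pos hv]
              exact Finset.mem_insert_self u _
            rw [heq'] at this
            exact hu this
          · exact hne (by rw [hdiag I (by tauto)]; exact hB _)
        · intro I _
          show g (g I) = I
          by_cases hu : u ∈ I <;> by_cases hv : v ∈ I
          · simp only [hg, if_pos hu, if_pos hv]
          · have hgI : g I = insert v (I.erase u) := by simp only [hg, if_pos hu, if_neg hv]
            have hvE : v ∉ I.erase u := fun h => hv (Finset.mem_of_mem_erase h)
            have hugI : u ∉ g I := by
              rw [hgI]
              simp only [Finset.mem_insert]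
              rintro (h | h); exact huv h; exact (Finset.notMem_erase u I) h
            have hvgI : v ∈ g I := by rw [hgI]; exact Finset.mem_insert_self v _
            rw [hgI]
            simp only [hg, if_neg (hgI ▸ hugI), if_pos (hgI ▸ hvgI)]
            rw [Finset.erase_insert hvE, Finset.insert_erase hu]
          · have hgI : g I = insert u (I.erase v) := by simp only [hg, if_neg hu, if_pos hv]
            have huE : u ∉ I.erase v := fun h => hu (Finset.mem_of_mem_erase h)
            have hvgI : v ∉ g I := by
              rw [hgI]
              simp only [Finset.mem_insert]
              rintro (h | h); exact huv h.symm; exact (Finset.notMem_erase v I) h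
            have hugI : u ∈ g I := by rw [hgI]; exact Finset.mem_insert_self u _
            rw [hgI]
            simp only [hg, if_pos (hgI ▸ hugI), if_neg (hgI ▸ hvgI)]
            rw [Finset.erase_insert huE, Finset.insert_erase hv]
          · simp only [hg, if_neg hu, if_neg hv]
      rw [Finset.sum_add_distrib] at key
      exact bool_eq_of_add_eq_zero hB key
    -- (iii) smaller support
    have hfilter : (Finset.univ.filter fun j => x' j ≠ 0)
        = ((Finset.univ.filter fun j => x j ≠ 0).erase u).erase v := by
      ext j
      simp only [Finset.mem_filter, Finset.mem_erase, Finset.mem_univ, true_and]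
      by_cases hju : j = u
      · subst hju
        simp [hx'u, huv]
      by_cases hjv : j = v
      · subst hjv
        simp [hx'v]
      · rw [hx'other j hju hjv]
        tauto
    have hmemu : u ∈ Finset.univ.filter fun j => x j ≠ 0 :=
      Finset.mem_filter.mpr ⟨Finset.mem_univ _, hx0⟩
    have hmemv : v ∈ (Finset.univ.filter fun j => x j ≠ 0).erase u :=
      Finset.mem_erase.mpr ⟨fun h => huv h.symm,
        Finset.mem_filter.mpr ⟨Finset.mem_univ _, fun h => hx0 (hxuv.trans h)⟩⟩
    have hN' : (Finset.univ.filter fun j => x' j ≠ 0).card = N - 2 := by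
      rw [hfilter, Finset.card_erase_of_mem hmemv, Finset.card_erase_of_mem hmemu, hN]
      omega
    have hNge : 2 ≤ N := by
      rw [← hN]
      calc 2 = ({u, v} : Finset (Fin n)).card := by
              rw [Finset.card_insert_of_notMem (by simpa using huv), Finset.card_singleton]
           _ ≤ _ := Finset.card_le_card (by
              intro j hj
              rcases Finset.mem_insert.mp hj with rfl | hj
              · exact hmemu
              · rw [Finset.mem_singleton] at hj
                subst hj
                exact Finset.mem_of_mem_erase hmemv)
    rw [hsum, hodd, ih (N - 2) (by omega) x' hN']
  · push_neg at hex
    have hinj : ∀ j k, x j ≠ 0 → x j = x k → j = k := by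
      intro j k hj hjk
      by_contra hne
      exact hj (hex j k hne hjk)
    set P : Finset (Fin n) := Finset.univ.filter (fun j => x j ≠ 0) with hP
    have hinjP : Set.InjOn x P := fun j hj k hk hjk =>
      hinj j k (Finset.mem_filter.mp hj).2 hjk
    have himage : P.image x ⊆ Finset.univ.erase 0 := by
      intro a ha
      obtain ⟨j, hj, rfl⟩ := Finset.mem_image.mp ha
      exact Finset.mem_erase.mpr ⟨(Finset.mem_filter.mp hj).2, Finset.mem_univ _⟩
    have hpcard : P.card + 1 ≤ Fintype.card A := by
      have h1 : (P.image x).card = P.card := Finset.card_image_of_injOn hinjP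
      have h2 := Finset.card_le_card himage
      rw [h1, Finset.card_erase_of_mem (Finset.mem_univ _), Finset.card_univ] at h2
      have h3 : 1 ≤ Fintype.card A := @Fintype.card_pos A _ ⟨0⟩
      omega
    have hterm : ∀ I : Finset (Fin n),
        φ (oddsuppOn I x) = φ ((I.filter fun j => x j ≠ 0).image x) := by
      intro I
      rw [phi_erase φ hφ, oddsuppOn_inj_image hinj]
    have hre : ∑ I : Finset (Fin n),
          gfun t (n - 1 - I.card) • φ ((I.filter fun j => x j ≠ 0).image x)
        = ∑ JK ∈ P.powerset ×ˢ Pᶜ.powerset,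
            gfun t (n - 1 - (JK.1.card + JK.2.card)) • φ (JK.1.image x) := by
      refine Finset.sum_bij'
        (fun I _ => (I.filter (fun j => x j ≠ 0), I.filter (fun j => ¬ x j ≠ 0)))
        (fun JK _ => JK.1 ∪ JK.2) ?_ ?_ ?_ ?_ ?_
      · intro I _
        rw [Finset.mem_product]
        constructor
        · exact Finset.mem_powerset.mpr (hP ▸ Finset.filter_subset_filter _ (Finset.subset_univ I))
        · refine Finset.mem_powerset.mpr fun j hj => ?_
          rw [Finset.mem_compl, hP, Finset.mem_filter]
          exact fun hc => (Finset.mem_filter.mp hj).2 hc.2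
      · intro JK _
        exact Finset.mem_univ _
      · intro I _
        exact Finset.filter_union_filter_not_eq _ I
      · intro JK hJK
        rw [Finset.mem_product] at hJK
        have hJ : JK.1 ⊆ P := Finset.mem_powerset.mp hJK.1
        have hK : JK.2 ⊆ Pᶜ := Finset.mem_powerset.mp hJK.2
        have e1 : (JK.1 ∪ JK.2).filter (fun j => x j ≠ 0) = JK.1 := by
          rw [Finset.filter_union]
          rw [Finset.filter_true_of_mem (fun j hj => (Finset.mem_filter.mp (hJ hj)).2),
            Finset.filter_false_of_mem, Finset.union_empty]
          intro j hj
          have := hK hj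
          rw [Finset.mem_compl, hP, Finset.mem_filter] at this
          intro hc
          exact this ⟨Finset.mem_univ j, hc⟩
        have e2 : (JK.1 ∪ JK.2).filter (fun j => ¬ x j ≠ 0) = JK.2 := by
          rw [Finset.filter_union]
          rw [Finset.filter_false_of_mem (fun j hj => not_not.mpr (Finset.mem_filter.mp (hJ hj)).2),
            Finset.filter_true_of_mem, Finset.empty_union]
          intro j hj
          have := hK hj
          rw [Finset.mem_compl, hP, Finset.mem_filter] at this
          intro hc
          exact this ⟨Finset.mem_univ j, hc⟩
        exact Prod.ext e1 e2
      · intro I _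
        have hc : (I.filter (fun j => x j ≠ 0)).card + (I.filter (fun j => ¬ x j ≠ 0)).card
            = I.card := Finset.card_filter_add_card_filter_not _
        rw [hc]
    have hq : Pᶜ.card = n - P.card := by
      rw [Finset.card_compl, Fintype.card_fin]
    have hinner : ∀ J ∈ P.powerset,
        ∑ K ∈ Pᶜ.powerset, gfun t (n - 1 - (J.card + K.card)) • φ (J.image x)
        = GN t (n - P.card) (n - 1 - J.card) • φ (J.image x) := by
      intro J _
      rw [Finset.sum_powerset, hq]
      unfold GN
      rw [Finset.sum_smul]
      refine Finset.sum_congr rfl fun k _ => ?_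
      have step : ∀ K ∈ Finset.powersetCard k Pᶜ,
          gfun t (n - 1 - (J.card + K.card)) • φ (J.image x)
          = gfun t ((n - 1 - J.card) - k) • φ (J.image x) := by
        intro K hK
        rw [(Finset.mem_powersetCard.mp hK).2]
        have e : n - 1 - (J.card + k) = (n - 1 - J.card) - k := by omega
        rw [e]
      rw [Finset.sum_congr rfl step, Finset.sum_const, Finset.card_powersetCard, hq, smul_smul]
    have hcoeff : ∀ J ∈ P.powerset,
        GN t (n - P.card) (n - 1 - J.card) • φ (J.image x)
        = (if J = P then 1 else 0) • φ (J.image x) := by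
      intro J hJ
      have hJP : J ⊆ P := Finset.mem_powerset.mp hJ
      have hJc : J.card ≤ P.card := Finset.card_le_card hJP
      have hpn : P.card < n := by omega
      have h1 := Gmain t ht (n - P.card - 1) (by omega) (n - 1 - J.card) (by omega)
      have hnp : n - P.card - 1 + 1 = n - P.card := by omega
      rw [hnp] at h1
      have h2 : (GN t (n - P.card) (n - 1 - J.card) : ZMod 2)
          = ((if J.card = P.card then 1 else 0 : ℕ) : ZMod 2) := by
        rw [h1]
        by_cases hc : J.card = P.card
        · rw [if_pos (by omega), if_pos hc]; norm_num
        · rw [if_neg (by omega), if_neg hc]; norm_num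
      have h3 : GN t (n - P.card) (n - 1 - J.card) % 2 = (if J.card = P.card then 1 else 0) % 2 :=
        (ZMod.natCast_eq_natCast_iff _ _ _).mp h2
      rw [bool_smul_congr hB h3]
      congr 1
      by_cases hc : J = P
      · rw [if_pos (by rw [hc]), if_pos hc]
      · rw [if_neg (fun h => hc (Finset.eq_of_subset_of_card_le hJP (le_of_eq h.symm))),
          if_neg hc]
    calc ∑ I : Finset (Fin n), gfun t (n - 1 - I.card) • φ (oddsuppOn I x)
        = ∑ I : Finset (Fin n),
            gfun t (n - 1 - I.card) • φ ((I.filter fun j => x j ≠ 0).image x) :=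
          Finset.sum_congr rfl (fun I _ => by rw [hterm I])
      _ = ∑ JK ∈ P.powerset ×ˢ Pᶜ.powerset,
            gfun t (n - 1 - (JK.1.card + JK.2.card)) • φ (JK.1.image x) := hre
      _ = ∑ J ∈ P.powerset, ∑ K ∈ Pᶜ.powerset,
            gfun t (n - 1 - (J.card + K.card)) • φ (J.image x) := Finset.sum_product _ _ _
      _ = ∑ J ∈ P.powerset, GN t (n - P.card) (n - 1 - J.card) • φ (J.image x) :=
          Finset.sum_congr rfl hinner
      _ = ∑ J ∈ P.powerset, (if J = P then 1 else 0) • φ (J.image x) :=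
          Finset.sum_congr rfl hcoeff
      _ = φ (P.image x) := by
          rw [Finset.sum_eq_single_of_mem P (Finset.mem_powerset_self P) ?_]
          · rw [if_pos rfl, one_smul]
          · intro J _ hne
            rw [if_neg hne, zero_smul]
      _ = φ (oddsuppOn Finset.univ x) := by
          rw [hterm Finset.univ]

end Main


section Glue
variable {A : Type*} [Fintype A] [DecidableEq A] [Zero A]

private lemma oddsupp_card_parity {n : ℕ} (x : Fin n → A) :
    (oddsupp x).card % 2 = n % 2 := by
  have hfib : (Finset.univ : Finset (Fin n)).card
      = ∑ a ∈ Finset.univ.image x, (Finset.univ.filter fun j => x j = a).card :=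
    Finset.card_eq_sum_card_fiberwise (fun j _ => Finset.mem_image_of_mem x (Finset.mem_univ j))
  have hn : n = ∑ a ∈ Finset.univ.image x, (Finset.univ.filter fun j => x j = a).card := by
    simpa using hfib
  have hcard : (oddsupp x).card = ∑ a ∈ Finset.univ.image x,
      if Odd ((Finset.univ.filter fun j => x j = a).card) then 1 else 0 := by
    unfold oddsupp
    rw [Finset.card_filter]
  rw [hcard]
  conv_rhs => rw [hn]
  rw [Finset.sum_nat_mod, Finset.sum_nat_mod (s := Finset.univ.image x)
    (f := fun a => (Finset.univ.filter fun j => x j = a).card)]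
  congr 1
  refine Finset.sum_congr rfl fun a _ => ?_
  by_cases h : Odd ((Finset.univ.filter fun j => x j = a).card)
  · rw [if_pos h]
    have := Nat.odd_iff.mp h
    omega
  · rw [if_neg h]
    rw [Nat.odd_iff] at h
    omega

private lemma listcount (a : A) : ∀ l : List A,
    ∑ i ∈ Finset.range l.length, (if l.getD i (0:A) = a then 1 else 0) = l.count a := by
  intro l
  induction l with
  | nil => simp
  | cons b l ih =>
    rw [List.length_cons, Finset.sum_range_succ']
    simp only [List.getD_cons_succ, List.getD_cons_zero]
    rw [ih]
    by_cases hba : b = a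
    · subst hba
      rw [List.count_cons_self, if_pos rfl]
    · rw [List.count_cons_of_ne hba, if_neg hba, add_zero]

private lemma achievable {n : ℕ} (hle : Fintype.card A ≤ n) (S : Finset A)
    (hpar : S.card % 2 = n % 2) : ∃ x : Fin n → A, oddsupp x = S := by
  set l := S.toList with hl
  have hlen : l.length = S.card := S.length_toList
  have hsn : S.card ≤ n := le_trans (Finset.card_le_univ S) hle
  refine ⟨fun j => l.getD j.val 0, ?_⟩
  ext a
  rw [show oddsupp (fun j : Fin n => l.getD j.val 0)
      = oddsuppOn Finset.univ (fun j : Fin n => l.getD j.val 0) from rfl, mem_oddsuppOn]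
  have hcnt : (Finset.univ.filter fun j : Fin n => l.getD j.val 0 = a).card
      = l.count a + (if a = 0 then n - S.card else 0) := by
    rw [Finset.card_filter]
    rw [Fin.sum_univ_eq_sum_range (fun i => if l.getD i 0 = a then 1 else 0) n]
    rw [Finset.range_eq_Ico, ← Finset.sum_Ico_consecutive _ (Nat.zero_le S.card) hsn]
    congr 1
    · rw [← Finset.range_eq_Ico, ← hlen]
      exact listcount a l
    · have hstep : ∀ i ∈ Finset.Ico S.card n,
          (if l.getD i (0:A) = a then 1 else 0) = (if a = 0 then 1 else 0) := by
        intro i hi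
        have : l.length ≤ i := by
          rw [hlen]
          exact (Finset.mem_Ico.mp hi).1
        rw [List.getD_eq_default _ _ this]
        by_cases h0 : a = 0
        · subst h0; simp
        · rw [if_neg (fun h => h0 h.symm), if_neg h0]
      rw [Finset.sum_congr rfl hstep, Finset.sum_const, Nat.card_Ico]
      by_cases h0 : a = 0
      · rw [if_pos h0, if_pos h0, smul_eq_mul, mul_one]
      · rw [if_neg h0, if_neg h0, smul_eq_mul, mul_zero]
  rw [hcnt]
  have heven : (n - S.card) % 2 = 0 := by omega
  by_cases haS : a ∈ S
  · rw [List.count_eq_one_of_mem S.nodup_toList (Finset.mem_toList.mpr haS)]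
    simp only [haS, iff_true]
    rw [Nat.odd_iff]
    split <;> omega
  · rw [List.count_eq_zero_of_not_mem (fun h => haS (Finset.mem_toList.mp h))]
    simp only [haS, iff_false]
    rw [Nat.odd_iff]
    split <;> omega

private lemma symmDiff_zero_parity (S : Finset A) :
    ((symmDiff S {(0:A)}).card + S.card) % 2 = 1 := by
  by_cases h : (0:A) ∈ S
  · have he : symmDiff S {(0:A)} = S.erase 0 := by
      ext a
      simp only [Finset.mem_symmDiff, Finset.mem_erase, Finset.mem_singleton]
      constructor
      · rintro (⟨h1, h2⟩ | ⟨rfl, h2⟩)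
        · exact ⟨h2, h1⟩
        · exact absurd h h2
      · rintro ⟨h1, h2⟩
        exact Or.inl ⟨h2, h1⟩
    rw [he, Finset.card_erase_of_mem h]
    have : 1 ≤ S.card := Finset.card_pos.mpr ⟨0, h⟩
    omega
  · have he : symmDiff S {(0:A)} = insert 0 S := by
      ext a
      simp only [Finset.mem_symmDiff, Finset.mem_insert, Finset.mem_singleton]
      constructor
      · rintro (⟨h1, h2⟩ | ⟨rfl, -⟩)
        · exact Or.inr h1
        · exact Or.inl rfl
      · rintro (rfl | h1)
        · exact Or.inr ⟨rfl, h⟩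
        · exact Or.inl ⟨h1, fun hc => h (hc ▸ h1)⟩
    rw [he, Finset.card_insert_of_notMem h]
    omega

end Glue


theorem decomposition_even_case {A B : Type*} [Fintype A] [DecidableEq A] [Zero A]
    [AddCommGroup B] [Finite B] (hB : ∀ b : B, b + b = 0) {n t : ℕ}
    (hn : n = Fintype.card A + 2 * t) (ht : 0 < t) (f : (Fin n → A) → B) :
    (DeterminedByOddsupp f ↔
      ∃ φ : Finset A → B, (∀ S : Finset A, φ S = φ (symmDiff S {(0 : A)})) ∧
        ∀ x : Fin n → A, f x = decompEven t φ x) ∧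
    (∀ φ₁ φ₂ : Finset A → B,
      (∀ S : Finset A, φ₁ S = φ₁ (symmDiff S {(0 : A)})) →
      (∀ S : Finset A, φ₂ S = φ₂ (symmDiff S {(0 : A)})) →
      (∀ x : Fin n → A, f x = decompEven t φ₁ x) →
      (∀ x : Fin n → A, f x = decompEven t φ₂ x) → φ₁ = φ₂) := by
  have ht1 : 1 ≤ t := ht
  have main : ∀ (φ : Finset A → B), (∀ S : Finset A, φ S = φ (symmDiff S {(0:A)})) →
      ∀ x : Fin n → A, decompEven t φ x = φ (oddsupp x) := by
    intro φ hφ x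
    rw [decomp_eq hB ht1 φ x]
    exact sum_eq_phi hB hn ht φ hφ _ x rfl
  constructor
  · constructor
    · rintro ⟨ψ, hψ⟩
      have key : ∀ S : Finset A,
          (if S.card % 2 = n % 2 then ψ S else ψ (symmDiff S {(0:A)}))
          = (if (symmDiff S {(0:A)}).card % 2 = n % 2 then ψ (symmDiff S {(0:A)})
             else ψ (symmDiff (symmDiff S {(0:A)}) {(0:A)})) := by
        intro S
        have hpar := symmDiff_zero_parity S
        by_cases h : S.card % 2 = n % 2
        · rw [if_pos h, if_neg (by omega), symmDiff_symmDiff_cancel_right]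
        · rw [if_neg h, if_pos (by omega)]
      refine ⟨fun S => if S.card % 2 = n % 2 then ψ S else ψ (symmDiff S {(0:A)}),
        fun S => key S, fun x => ?_⟩
      rw [main _ (fun S => key S) x]
      show f x = if (oddsupp x).card % 2 = n % 2 then ψ (oddsupp x)
          else ψ (symmDiff (oddsupp x) {(0:A)})
      rw [if_pos (oddsupp_card_parity x)]
      exact hψ x
    · rintro ⟨φ, hφ, hdef⟩
      exact ⟨φ, fun x => by rw [hdef x, main φ hφ x]⟩
  · intro φ₁ φ₂ h1 h2 hd1 hd2
    have hall : ∀ x : Fin n → A, φ₁ (oddsupp x) = φ₂ (oddsupp x) := fun x => by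
      rw [← main φ₁ h1 x, ← main φ₂ h2 x, ← hd1 x, ← hd2 x]
    have hgood : ∀ S : Finset A, S.card % 2 = n % 2 → φ₁ S = φ₂ S := by
      intro S hS
      obtain ⟨x, hx⟩ := achievable (by omega) S hS
      rw [← hx]
      exact hall x
    funext S
    by_cases h : S.card % 2 = n % 2
    · exact hgood S h
    · have hpar := symmDiff_zero_parity S
      rw [h1 S, h2 S]
      exact hgood _ (by omega)
end

section
/- Let B be an arbitrary (possibly infinite) Boolean group, A a finite set, and f : A^n → B with n − |A| = 2t + 1 > 0. Then f is determined by oddsupp if and only if there is a map φ : P'_n(A) → B such that for all x ∈ A^n, f(x) = Σ_{i=t+1}^{⌊n/2⌋} Σ_{I ⊆ [n], |I| = n−2i} C(i−1, t) · Θ_φ(x|_I), where C(i−1, t) · b denotes the C(i−1, t)-fold sum b + ⋯ + b in B; moreover φ is uniquely determined by f. -/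
set_option linter.unusedSectionVars false
set_option linter.unreachableTactic false
set_option linter.unusedTactic false
set_option maxHeartbeats 1000000


open Finset

namespace Aux
section Bin
open PowerSeries

instance : CharP ((ZMod 2)⟦X⟧) 2 := by
  constructor
  intro n
  rw [← map_natCast (PowerSeries.C (R := ZMod 2)) n,
    map_eq_zero_iff _ PowerSeries.C_injective, ZMod.natCast_eq_zero_iff]

lemma coeff_one_add_X_pow (q k : ℕ) :
    PowerSeries.coeff (R := ZMod 2) k ((1 + X) ^ q) = (Nat.choose q k : ZMod 2) := by
  rw [add_pow, map_sum]
  have h1 : ∀ m ∈ Finset.range (q + 1),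
      (PowerSeries.coeff (R := ZMod 2) k) (1 ^ m * X ^ (q - m) * (Nat.choose q m : (ZMod 2)⟦X⟧))
        = if m = q - k ∧ k ≤ q then (Nat.choose q m : ZMod 2) else 0 := by
    intro m hm
    rw [one_pow, mul_comm, ← map_natCast (PowerSeries.C (R := ZMod 2)), PowerSeries.coeff_C_mul,
      one_mul, PowerSeries.coeff_X_pow]
    simp only [Finset.mem_range, Nat.lt_succ_iff] at hm
    by_cases h : k = q - m
    · rw [if_pos h, if_pos (by omega), mul_one]
    · rw [if_neg h, if_neg (by omega), mul_zero]
  rw [Finset.sum_congr rfl h1]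
  by_cases hk : k ≤ q
  · simp only [hk, and_true]
    rw [Finset.sum_ite_eq' (Finset.range (q + 1)) (q - k)]
    simp only [Finset.mem_range, Nat.lt_succ_iff]
    rw [if_pos (by omega)]
    rw [Nat.choose_symm hk]
  · simp only [hk, and_false, if_false, Finset.sum_const_zero]
    rw [Nat.choose_eq_zero_of_lt (by omega)]
    simp

lemma coeff_one_sub_X_pow (q k : ℕ) :
    PowerSeries.coeff (R := ZMod 2) k ((1 - X) ^ q) = (Nat.choose q k : ZMod 2) := by
  rw [CharTwo.sub_eq_add, coeff_one_add_X_pow]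

lemma bin_zmod (t q τ : ℕ) (hq : t + 1 ≤ q) :
    ∑ i ∈ Finset.Icc (t+1) (q+τ),
      (Nat.choose (i-1) t : ZMod 2) * (Nat.choose q (q+τ-i) : ZMod 2)
      = if τ = 0 then 1 else 0 := by
  set F : (ZMod 2)⟦X⟧ := PowerSeries.mk fun n => (Nat.choose (t+n) t : ZMod 2) with hFdef
  have hF : F * (1 - X)^(t+1) = 1 := by
    rw [hFdef]
    exact PowerSeries.mk_add_choose_mul_one_sub_pow_eq_one _ t
  have key : (X^(t+1) * F) * (1-X)^q = X^(t+1) * (1-X)^(q-(t+1)) := by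
    have h2 : (1 - X : (ZMod 2)⟦X⟧)^q = (1-X)^(t+1) * (1-X)^(q-(t+1)) := by
      rw [← pow_add]; congr 1; omega
    rw [h2, mul_assoc, ← mul_assoc F, hF, one_mul]
  have lhs_eq : PowerSeries.coeff (R := ZMod 2) (q+τ) ((X^(t+1) * F) * (1-X)^q)
      = ∑ i ∈ Finset.Icc (t+1) (q+τ),
        (Nat.choose (i-1) t : ZMod 2) * (Nat.choose q (q+τ-i) : ZMod 2) := by
    rw [PowerSeries.coeff_mul]
    rw [Finset.Nat.sum_antidiagonal_eq_sum_range_succ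
      (fun a b => PowerSeries.coeff (R := ZMod 2) a (X^(t+1) * F)
        * PowerSeries.coeff (R := ZMod 2) b ((1-X)^q))]
    have step : ∀ i ∈ Finset.range (q+τ+1),
        PowerSeries.coeff (R := ZMod 2) i (X^(t+1) * F)
          * PowerSeries.coeff (R := ZMod 2) (q+τ-i) ((1-X)^q)
        = if t+1 ≤ i then
            (Nat.choose (i-1) t : ZMod 2) * (Nat.choose q (q+τ-i) : ZMod 2) else 0 := by
      intro i _
      rw [PowerSeries.coeff_X_pow_mul', coeff_one_sub_X_pow]
      by_cases h : t + 1 ≤ i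
      · rw [if_pos h, if_pos h, hFdef, PowerSeries.coeff_mk]
        congr 3
        omega
      · rw [if_neg h, if_neg h, zero_mul]
    rw [Finset.sum_congr rfl step, Finset.sum_ite, Finset.sum_const_zero, add_zero]
    apply Finset.sum_congr _ (fun _ _ => rfl)
    ext i
    simp only [Finset.mem_filter, Finset.mem_range, Finset.mem_Icc]
    omega
  rw [← lhs_eq, key, PowerSeries.coeff_X_pow_mul', if_pos (by omega : t+1 ≤ q+τ),
    coeff_one_sub_X_pow]
  rcases Nat.eq_zero_or_pos τ with h | h
  · subst h
    rw [if_pos rfl]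
    rw [show q + 0 - (t+1) = q - (t+1) from by omega, Nat.choose_self]
    simp
  · rw [if_neg (by omega)]
    rw [Nat.choose_eq_zero_of_lt (by omega)]
    simp

lemma bin_nat (t q τ : ℕ) (hq : t + 1 ≤ q) :
    (∑ i ∈ Finset.Icc (t+1) (q+τ), Nat.choose (i-1) t * Nat.choose q (q+τ-i)) % 2
      = if τ = 0 then 1 else 0 := by
  have h := bin_zmod t q τ hq
  have hcast : ((∑ i ∈ Finset.Icc (t+1) (q+τ),
      Nat.choose (i-1) t * Nat.choose q (q+τ-i) : ℕ) : ZMod 2)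
      = if τ = 0 then 1 else 0 := by
    push_cast
    rw [h]
  have := congrArg ZMod.val hcast
  rw [ZMod.val_natCast] at this
  rw [this]
  split <;> rfl

lemma num_lemma (t q r d : ℕ) (hq : t + 1 ≤ q) (hd : d ≤ r) :
    (∑ i ∈ Finset.Icc (t+1) ((2*q+r)/2), Nat.choose (i-1) t *
      (if d ≤ 2*q+r - 2*i ∧ 2 ∣ (2*q+r - 2*i - d) then Nat.choose q ((2*q+r - 2*i - d)/2) else 0)) % 2
      = if d = r then 1 else 0 := by
  rcases Nat.even_or_odd (r - d) with ⟨τ, hτ⟩ | hodd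
  · -- r - d = 2τ
    have hsum : ∑ i ∈ Finset.Icc (t+1) ((2*q+r)/2), Nat.choose (i-1) t *
        (if d ≤ 2*q+r - 2*i ∧ 2 ∣ (2*q+r - 2*i - d) then Nat.choose q ((2*q+r - 2*i - d)/2) else 0)
        = ∑ i ∈ Finset.Icc (t+1) (q+τ), Nat.choose (i-1) t * Nat.choose q (q+τ-i) := by
      rw [← Finset.sum_subset (Finset.Icc_subset_Icc_right (by omega : q+τ ≤ (2*q+r)/2))]
      · apply Finset.sum_congr rfl
        intro i hi
        simp only [Finset.mem_Icc] at hi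
        rw [if_pos (by omega)]
        have he : (2*q+r - 2*i - d)/2 = q+τ-i := by omega
        rw [he]
      · intro i hi hni
        simp only [Finset.mem_Icc] at hi hni
        rw [if_neg (by omega), mul_zero]
    rw [hsum, bin_nat t q τ hq]
    by_cases hdr : d = r
    · rw [if_pos hdr, if_pos (by omega)]
    · rw [if_neg (by omega : ¬ τ = 0), if_neg hdr]
  · -- r - d odd
    obtain ⟨c, hc⟩ := hodd
    have hz : ∀ i ∈ Finset.Icc (t+1) ((2*q+r)/2), Nat.choose (i-1) t *
        (if d ≤ 2*q+r - 2*i ∧ 2 ∣ (2*q+r - 2*i - d) then Nat.choose q ((2*q+r - 2*i - d)/2) else 0) = 0 := by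
      intro i hi
      simp only [Finset.mem_Icc] at hi
      rw [if_neg (by omega), mul_zero]
    rw [Finset.sum_congr rfl hz, Finset.sum_const_zero]
    rw [if_neg (by omega : ¬ d = r)]
    rfl

end Bin

variable {A : Type*} [DecidableEq A]

lemma natCast_zmod_two (m : ℕ) : ((m : ZMod 2)) = if Odd m then 1 else 0 := by
  rw [← ZMod.natCast_mod m 2]
  rcases Nat.even_or_odd m with h | h
  · rw [if_neg (by simpa using (Nat.not_odd_iff_even.mpr h)), Nat.even_iff.mp h]
    simp
  · rw [if_pos h, Nat.odd_iff.mp h]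
    simp

lemma mem_oddsuppOn {n : ℕ} {I : Finset (Fin n)} {x : Fin n → A} {a : A} :
    a ∈ oddsuppOn I x ↔ Odd ((I.filter fun j => x j = a).card) := by
  unfold oddsuppOn
  simp only [Finset.mem_filter, Finset.mem_image, and_iff_right_iff_imp]
  intro h
  have hpos : 0 < ((I.filter fun j => x j = a).card) := by
    rcases h with ⟨c, hc⟩; omega
  obtain ⟨j, hj⟩ := Finset.card_pos.mp hpos
  simp only [Finset.mem_filter] at hj
  exact ⟨j, hj.1, hj.2⟩

lemma oddsupp_eq_oddsuppOn_univ {n : ℕ} (x : Fin n → A) :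
    oddsupp x = oddsuppOn Finset.univ x := rfl

/-- The group algebra over GF(2). -/
abbrev Rg (A : Type*) := AddMonoidAlgebra (ZMod 2) (A → ZMod 2)

def delt (a : A) : A → ZMod 2 := fun b => if a = b then 1 else 0
def indF (S : Finset A) : A → ZMod 2 := fun b => if b ∈ S then 1 else 0
noncomputable def monoF (S : Finset A) : Rg A := AddMonoidAlgebra.single (indF S) 1

lemma sum_delt_apply {ι : Type*} (s : Finset ι) (y : ι → A) (b : A) :
    (∑ j ∈ s, delt (y j)) b = (((s.filter fun j => y j = b).card : ℕ) : ZMod 2) := by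
  rw [Finset.sum_apply, ← Finset.sum_boole]
  exact Finset.sum_congr rfl fun j _ => by simp [delt, eq_comm]

lemma sum_delt_I {n : ℕ} (I : Finset (Fin n)) (x : Fin n → A) :
    ∑ j ∈ I, delt (x j) = indF (oddsuppOn I x) := by
  funext b
  rw [sum_delt_apply, natCast_zmod_two]
  simp [indF, mem_oddsuppOn]

lemma sum_delt_S (S : Finset A) : ∑ a ∈ S, delt a = indF S := by
  funext b
  have h0 : (∑ a ∈ S, delt a) b = (∑ a ∈ S, delt (id a)) b := rfl
  rw [h0, sum_delt_apply S id b]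
  have h1 : S.filter (fun j => id j = b) = S.filter (· = b) := rfl
  rw [h1, Finset.filter_eq']
  by_cases hb : b ∈ S <;> simp [hb, indF]

lemma add_self_Rg (z : Rg A) : z + z = 0 := by
  apply AddMonoidAlgebra.coeff_injective
  rw [AddMonoidAlgebra.coeff_add, AddMonoidAlgebra.coeff_zero]
  apply Finsupp.ext
  intro v
  rw [Finsupp.add_apply, Finsupp.coe_zero, Pi.zero_apply, CharTwo.add_self_eq_zero]

lemma add_self_poly (p : Polynomial (Rg A)) : p + p = 0 := by
  apply Polynomial.ext
  intro k
  rw [Polynomial.coeff_add, Polynomial.coeff_zero, add_self_Rg]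

lemma nsmul_of_add_self {M : Type*} [AddCommMonoid M] (h : ∀ z : M, z + z = 0) (k : ℕ)
    (z : M) : k • z = if k % 2 = 1 then z else 0 := by
  induction k with
  | zero => simp
  | succ k ih =>
    rw [succ_nsmul, ih]
    rcases Nat.even_or_odd k with hk | hk
    · have he := Nat.even_iff.mp hk
      rw [if_neg (by omega), if_pos (by omega), zero_add]
    · have he := Nat.odd_iff.mp hk
      rw [if_pos (by omega), if_neg (by omega), h]

lemma prod_gg {ι : Type*} (s : Finset ι) (y : ι → A) :
    (∏ j ∈ s, (AddMonoidAlgebra.single (delt (y j)) (1 : ZMod 2) : Rg A))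
      = AddMonoidAlgebra.single (∑ j ∈ s, delt (y j)) 1 := by
  rw [AddMonoidAlgebra.prod_single, Finset.prod_const_one]

lemma sq_factor (a : A) :
    (Polynomial.C (AddMonoidAlgebra.single (delt a) (1 : ZMod 2) : Rg A) * Polynomial.X + 1) ^ 2
      = Polynomial.X ^ 2 + 1 := by
  have hd : delt a + delt a = 0 := funext fun b => CharTwo.add_self_eq_zero _
  have hgg : (AddMonoidAlgebra.single (delt a) (1 : ZMod 2) : Rg A)
      * AddMonoidAlgebra.single (delt a) 1 = 1 := by
    rw [AddMonoidAlgebra.single_mul_single, hd, mul_one]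
    exact AddMonoidAlgebra.one_def.symm
  have expand : ∀ u : Polynomial (Rg A), (u + 1) ^ 2 = u ^ 2 + (u + u) + 1 := fun u => by ring
  rw [expand, add_self_poly, add_zero, mul_pow, ← Polynomial.C_pow, pow_two, hgg,
    Polynomial.C_1, one_mul]

lemma prod_factor_expand {ι : Type*} [DecidableEq ι] (s : Finset ι) (y : ι → A) :
    (∏ j ∈ s, (Polynomial.C (AddMonoidAlgebra.single (delt (y j)) (1 : ZMod 2) : Rg A)
        * Polynomial.X + 1))
      = ∑ I ∈ s.powerset,
          Polynomial.C (AddMonoidAlgebra.single (∑ j ∈ I, delt (y j)) (1 : ZMod 2) : Rg A)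
            * Polynomial.X ^ I.card := by
  rw [Finset.prod_add]
  apply Finset.sum_congr rfl
  intro I _
  rw [Finset.prod_const_one, mul_one, Finset.prod_mul_distrib, Finset.prod_const,
    ← map_prod, prod_gg]


section Key
variable {A : Type*} [DecidableEq A] [Fintype A]

lemma coeff_X_sq_add_one_pow (q e : ℕ) :
    ((Polynomial.X ^ 2 + 1 : Polynomial (Rg A)) ^ q).coeff e
      = if 2 ∣ e then ((Nat.choose q (e / 2) : ℕ) : Rg A) else 0 := by
  rw [add_pow, Polynomial.finset_sum_coeff]
  have step : ∀ s ∈ Finset.range (q+1),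
      ((Polynomial.X ^ 2) ^ s * 1 ^ (q - s) * (Nat.choose q s : Polynomial (Rg A))).coeff e
        = if s = e / 2 ∧ 2 ∣ e then ((Nat.choose q s : ℕ) : Rg A) else 0 := by
    intro s hs
    rw [one_pow, mul_one, ← pow_mul, ← Polynomial.C_eq_natCast, mul_comm,
      Polynomial.coeff_C_mul, Polynomial.coeff_X_pow]
    by_cases h : e = 2 * s
    · rw [if_pos h, if_pos (by omega), mul_one]
    · rw [if_neg h, if_neg (by omega), mul_zero]
  rw [Finset.sum_congr rfl step]
  by_cases h2 : 2 ∣ e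
  · simp only [h2, and_true, if_true]
    rw [Finset.sum_ite_eq' (Finset.range (q+1)) (e/2)
      (fun s => ((Nat.choose q s : ℕ) : Rg A))]
    by_cases hle : e / 2 ≤ q
    · rw [if_pos (Finset.mem_range.mpr (by omega))]
    · rw [if_neg (by simp only [Finset.mem_range]; omega),
        Nat.choose_eq_zero_of_lt (by omega), Nat.cast_zero]
  · simp only [h2, and_false, if_false, Finset.sum_const_zero]

lemma keyR {n t : ℕ} (hn : n = Fintype.card A + 2*t + 1) (x : Fin n → A) :
    ∑ i ∈ Finset.Icc (t+1) (n/2),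
      ∑ I ∈ Finset.univ.filter (fun I : Finset (Fin n) => I.card = n - 2*i),
        (Nat.choose (i-1) t) • monoF (oddsuppOn I x)
      = monoF (oddsupp x) := by
  classical
  set m : A → ℕ := fun a => (Finset.univ.filter fun j => x j = a).card with hm
  set O : Finset A := oddsupp x with hO
  set r : ℕ := O.card with hr
  have hOf : O = Finset.univ.filter fun a => Odd (m a) := by
    rw [hO, oddsupp_eq_oddsuppOn_univ]
    ext a
    rw [mem_oddsuppOn, Finset.mem_filter]
    simp [hm]
  have hsum_m : ∑ a, m a = n := by
    simp only [hm]
    rw [← Finset.card_eq_sum_card_fiberwise (fun j (_ : j ∈ Finset.univ) => Finset.mem_univ (x j))]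
    simp
  have hmod_sum : ∑ a, m a % 2 = r := by
    rw [hr, hOf, Finset.card_filter]
    apply Finset.sum_congr rfl
    intro a _
    rcases Nat.even_or_odd (m a) with h | h
    · have he := Nat.even_iff.mp h
      rw [if_neg (Nat.not_odd_iff_even.mpr h)]
      omega
    · have he := Nat.odd_iff.mp h
      rw [if_pos h]
      omega
  have hrA : r ≤ Fintype.card A := by
    rw [hr, hOf]
    exact (Finset.card_filter_le _ _).trans (le_of_eq Finset.card_univ)
  have hrn : r % 2 = n % 2 := by
    have h1 := Finset.sum_nat_mod Finset.univ 2 m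
    omega
  set q : ℕ := (n - r)/2 with hq
  have hn2 : n = 2*q + r := by omega
  have hqt : t + 1 ≤ q := by omega
  set gP : A → Polynomial (Rg A) := fun a =>
    Polynomial.C (AddMonoidAlgebra.single (delt a) (1:ZMod 2)) * Polynomial.X + 1 with hgP
  set P : Polynomial (Rg A) := ∏ j : Fin n, gP (x j) with hP
  have stepA : ∀ mm, P.coeff mm
      = ∑ I ∈ Finset.univ.filter (fun I : Finset (Fin n) => I.card = mm),
          monoF (oddsuppOn I x) := by
    intro mm
    rw [hP]
    simp only [hgP]
    rw [prod_factor_expand Finset.univ x, Polynomial.finset_sum_coeff]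
    have step : ∀ I : Finset (Fin n), I ∈ Finset.univ.powerset →
        (Polynomial.C (AddMonoidAlgebra.single (∑ j ∈ I, delt (x j)) (1:ZMod 2) : Rg A)
          * Polynomial.X ^ I.card).coeff mm
        = if I.card = mm then monoF (oddsuppOn I x) else 0 := by
      intro I _
      rw [Polynomial.coeff_C_mul, Polynomial.coeff_X_pow, sum_delt_I]
      by_cases h : I.card = mm
      · rw [if_pos h, if_pos h.symm, mul_one]; rfl
      · rw [if_neg h, if_neg (fun hh => h hh.symm), mul_zero]
    rw [Finset.sum_congr rfl step, Finset.powerset_univ, ← Finset.sum_filter]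
  have stepB : P = (∑ S ∈ O.powerset, Polynomial.C (monoF S) * Polynomial.X ^ S.card)
      * (Polynomial.X^2 + 1)^q := by
    have h1 : P = ∏ a : A, (gP a) ^ (m a) := by
      rw [hP, ← Finset.prod_fiberwise_of_maps_to (fun j (_ : j ∈ Finset.univ) => Finset.mem_univ (x j))
        (fun j => gP (x j))]
      apply Finset.prod_congr rfl
      intro a _
      rw [Finset.prod_congr rfl (fun j hj => by rw [(Finset.mem_filter.mp hj).2]),
        Finset.prod_const]
    have h2 : ∀ a : A, (gP a) ^ (m a)
        = (Polynomial.X^2+1)^(m a / 2) * (gP a)^(m a % 2) := by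
      intro a
      conv_lhs => rw [show m a = 2*(m a / 2) + m a % 2 by omega]
      rw [pow_add, pow_mul]
      congr 1
      rw [hgP]
      exact congrArg (· ^ (m a / 2)) (sq_factor a)
    rw [h1, Finset.prod_congr rfl (fun a _ => h2 a), Finset.prod_mul_distrib,
      Finset.prod_pow_eq_pow_sum]
    have hsq : ∑ a, m a / 2 = q := by
      have h4 : ∑ a, m a = 2 * (∑ a, m a / 2) + ∑ a, m a % 2 := by
        rw [Finset.mul_sum, ← Finset.sum_add_distrib]
        exact Finset.sum_congr rfl fun a _ => by omega
      omega
    rw [hsq]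
    have h6 : (∏ a : A, (gP a)^(m a % 2)) = ∏ a ∈ O, gP a := by
      rw [hOf, Finset.prod_filter]
      apply Finset.prod_congr rfl
      intro a _
      rcases Nat.even_or_odd (m a) with h | h
      · rw [if_neg (Nat.not_odd_iff_even.mpr h), Nat.even_iff.mp h, pow_zero]
      · rw [if_pos h, Nat.odd_iff.mp h, pow_one]
    rw [h6]
    simp only [hgP]
    rw [prod_factor_expand O (fun a => a), mul_comm]
    refine congrArg (· * _) ?_
    exact Finset.sum_congr rfl fun S _ => by rw [sum_delt_S]; rfl
  have stepC : ∀ i, P.coeff (n - 2*i)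
      = ∑ S ∈ O.powerset,
          (if S.card ≤ n - 2*i ∧ 2 ∣ (n - 2*i - S.card)
            then Nat.choose q ((n - 2*i - S.card)/2) else 0) • monoF S := by
    intro i
    rw [stepB, Finset.sum_mul, Polynomial.finset_sum_coeff]
    apply Finset.sum_congr rfl
    intro S _
    rw [mul_assoc, Polynomial.coeff_C_mul, Polynomial.coeff_X_pow_mul',
      coeff_X_sq_add_one_pow]
    by_cases h1 : S.card ≤ n - 2*i
    · by_cases h2 : 2 ∣ (n - 2*i - S.card)
      · rw [if_pos h1, if_pos h2, if_pos ⟨h1, h2⟩, nsmul_eq_mul, mul_comm]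
      · rw [if_pos h1, if_neg h2, if_neg (fun hh => h2 hh.2), mul_zero, zero_smul]
    · rw [if_neg h1, if_neg (fun hh => h1 hh.1), mul_zero, zero_smul]
  have LHS1 : ∑ i ∈ Finset.Icc (t+1) (n/2),
      ∑ I ∈ Finset.univ.filter (fun I : Finset (Fin n) => I.card = n - 2*i),
        (Nat.choose (i-1) t) • monoF (oddsuppOn I x)
      = ∑ i ∈ Finset.Icc (t+1) (n/2), (Nat.choose (i-1) t) • P.coeff (n - 2*i) := by
    apply Finset.sum_congr rfl
    intro i _
    rw [stepA, Finset.smul_sum]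
  rw [LHS1]
  have LHS2 : ∀ i ∈ Finset.Icc (t+1) (n/2), (Nat.choose (i-1) t) • P.coeff (n - 2*i)
      = ∑ S ∈ O.powerset,
          ((Nat.choose (i-1) t) * (if S.card ≤ n - 2*i ∧ 2 ∣ (n - 2*i - S.card)
            then Nat.choose q ((n - 2*i - S.card)/2) else 0)) • monoF S := by
    intro i _
    rw [stepC, Finset.smul_sum]
    exact Finset.sum_congr rfl fun S _ => (mul_smul _ _ _).symm
  rw [Finset.sum_congr rfl LHS2, Finset.sum_comm]
  have perS : ∀ S ∈ O.powerset,
      (∑ i ∈ Finset.Icc (t+1) (n/2),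
        ((Nat.choose (i-1) t) * (if S.card ≤ n - 2*i ∧ 2 ∣ (n - 2*i - S.card)
            then Nat.choose q ((n - 2*i - S.card)/2) else 0)) • monoF S)
      = if S.card = r then monoF S else 0 := by
    intro S hS
    rw [← Finset.sum_smul]
    have hd : S.card ≤ r := Finset.card_le_card (Finset.mem_powerset.mp hS)
    have hk : (∑ i ∈ Finset.Icc (t+1) (n/2),
        (Nat.choose (i-1) t) * (if S.card ≤ n - 2*i ∧ 2 ∣ (n - 2*i - S.card)
            then Nat.choose q ((n - 2*i - S.card)/2) else 0)) % 2
        = if S.card = r then 1 else 0 := by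
      rw [hn2]
      exact num_lemma t q r S.card hqt hd
    rw [nsmul_of_add_self add_self_Rg, hk]
    by_cases hSr : S.card = r
    · rw [if_pos hSr, if_pos hSr, if_pos rfl]
    · rw [if_neg hSr, if_neg hSr]
      simp
  rw [Finset.sum_congr rfl perS]
  rw [Finset.sum_eq_single_of_mem O (Finset.mem_powerset_self O)]
  · rw [if_pos hr.symm]
  · intro S hS hne
    rw [if_neg]
    intro hcard
    exact hne (Finset.eq_of_subset_of_card_le (Finset.mem_powerset.mp hS) (by omega))

end Key

section Transfer
variable {A B : Type*} [DecidableEq A] [Fintype A] [AddCommGroup B]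

def toSet (v : A → ZMod 2) : Finset A := Finset.univ.filter fun a => v a = 1

lemma toSet_indF (S : Finset A) : toSet (indF S) = S := by
  ext a
  simp only [toSet, indF, Finset.mem_filter, Finset.mem_univ, true_and]
  by_cases ha : a ∈ S
  · simp [ha]
  · simp [ha]

noncomputable def Tphi (hB : ∀ b : B, b + b = 0) (φ : Finset A → B) : Rg A →+ B :=
  AddMonoidHom.mk' (fun z : Rg A => z.coeff.sum fun v c => if c = 0 then 0 else φ (toSet v))
    (by
      intro z w
      rw [AddMonoidAlgebra.coeff_add]
      apply Finsupp.sum_add_index' (fun v => by simp)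
      intro v c d
      have h01 : ∀ e : ZMod 2, e = 0 ∨ e = 1 := by decide
      rcases h01 c with hc | hc <;> rcases h01 d with hd | hd <;> subst hc <;> subst hd
      · simp
      · simp
      · simp
      · show (if (0:ZMod 2) = 0 then (0:B) else φ (toSet v))
            = (if (1:ZMod 2) = 0 then (0:B) else φ (toSet v))
              + (if (1:ZMod 2) = 0 then (0:B) else φ (toSet v))
        rw [if_pos rfl, if_neg one_ne_zero]
        exact (hB _).symm)

lemma Tphi_mono (hB : ∀ b : B, b + b = 0) (φ : Finset A → B) (S : Finset A) :
    Tphi hB φ (monoF S) = φ S := by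
  unfold Tphi monoF
  rw [AddMonoidHom.mk'_apply]
  have h0 : (AddMonoidAlgebra.single (indF S) (1:ZMod 2) : Rg A).coeff = Finsupp.single (indF S) 1 := rfl
  rw [h0, Finsupp.sum_single_index (by simp), if_neg one_ne_zero, toSet_indF]

lemma key_final {n t : ℕ} (hB : ∀ b : B, b + b = 0) (hn : n = Fintype.card A + 2*t + 1)
    (φ : Finset A → B) (x : Fin n → A) :
    (∑ i ∈ Finset.Icc (t+1) (n/2),
      ∑ I ∈ Finset.univ.filter (fun I : Finset (Fin n) => I.card = n - 2*i),
        (Nat.choose (i-1) t) • φ (oddsuppOn I x))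
      = φ (oddsupp x) := by
  have h := congrArg (Tphi hB φ) (keyR hn x)
  rw [map_sum] at h
  simp only [map_sum, map_nsmul, Tphi_mono] at h
  rw [← h]

end Transfer

section Exists
variable {A : Type*} [DecidableEq A] [Fintype A]

lemma exists_x {n : ℕ} (S : Finset A) (a0 : A) (hcard : S.card ≤ n)
    (hpar : (n - S.card) % 2 = 0) :
    ∃ x : Fin n → A, oddsupp x = S := by
  classical
  have hsplit : n = S.card + (n - S.card) := by omega
  let e : Fin n ≃ (Fin S.card ⊕ Fin (n - S.card)) :=
    (finCongr hsplit).trans finSumFinEquiv.symm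
  let y : Fin S.card ⊕ Fin (n - S.card) → A :=
    Sum.elim (fun i => (S.equivFin.symm i : A)) (fun _ => a0)
  refine ⟨y ∘ e, ?_⟩
  have hcount : ∀ a, (Finset.univ.filter fun j => (y ∘ e) j = a).card
      = (if a ∈ S then 1 else 0) + (if a = a0 then n - S.card else 0) := by
    intro a
    rw [← Fintype.card_subtype]
    rw [Fintype.card_congr (e.subtypeEquiv (fun j => Iff.rfl) :
      {j : Fin n // (y ∘ e) j = a} ≃ {z : Fin S.card ⊕ Fin (n - S.card) // y z = a})]
    rw [Fintype.card_congr
      (Equiv.subtypeSum : {z : Fin S.card ⊕ Fin (n - S.card) // y z = a}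
        ≃ {i : Fin S.card // y (Sum.inl i) = a} ⊕ {k : Fin (n - S.card) // y (Sum.inr k) = a})]
    rw [Fintype.card_sum]
    congr 1
    · rw [Fintype.card_congr (S.equivFin.symm.subtypeEquiv (fun i => Iff.rfl) :
        {i : Fin S.card // y (Sum.inl i) = a} ≃ {b : S // (b : A) = a})]
      by_cases ha : a ∈ S
      · rw [if_pos ha]
        exact Fintype.card_eq_one_iff.mpr
          ⟨⟨⟨a, ha⟩, rfl⟩, fun z => Subtype.ext (Subtype.ext z.2)⟩
      · rw [if_neg ha]
        exact Fintype.card_eq_zero_iff.mpr ⟨fun b => ha (b.2 ▸ b.1.2)⟩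
    · by_cases ha : a = a0
      · rw [if_pos ha]
        rw [Fintype.card_congr (Equiv.subtypeUnivEquiv (fun k => ha ▸ rfl))]
        exact Fintype.card_fin _
      · rw [if_neg ha]
        exact Fintype.card_eq_zero_iff.mpr ⟨fun k => ha k.2.symm⟩
  ext a
  rw [oddsupp_eq_oddsuppOn_univ, mem_oddsuppOn, hcount a, Nat.odd_iff]
  rcases eq_or_ne a a0 with ha0 | ha0
  · subst ha0
    by_cases ha : a ∈ S <;> simp [ha] <;> omega
  · by_cases ha : a ∈ S <;> simp [ha, ha0] <;> omega

end Exists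

end Aux

theorem decomposition_odd_case_infinite_group {A B : Type*} [Fintype A] [DecidableEq A]
    [AddCommGroup B] (hB : ∀ b : B, b + b = 0) {n t : ℕ}
    (hn : n = Fintype.card A + 2 * t + 1) (f : (Fin n → A) → B) :
    (DeterminedByOddsupp f ↔
      ∃ φ : Finset A → B, ∀ x : Fin n → A, f x = decompOdd t φ x) ∧
    (∀ φ₁ φ₂ : Finset A → B,
      (∀ x : Fin n → A, f x = decompOdd t φ₁ x) →
      (∀ x : Fin n → A, f x = decompOdd t φ₂ x) →
      ∀ S : Finset A, S.card ≤ n → S.card % 2 = n % 2 → φ₁ S = φ₂ S) := by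
  classical
  have key : ∀ (φ : Finset A → B) (x : Fin n → A), decompOdd t φ x = φ (oddsupp x) := by
    intro φ x
    unfold decompOdd
    exact Aux.key_final hB hn φ x
  constructor
  · constructor
    · rintro ⟨φ, hφ⟩
      exact ⟨φ, fun x => by rw [hφ x, ← key φ x]⟩
    · rintro ⟨φ, hφ⟩
      exact ⟨φ, fun x => by rw [hφ x, key φ x]⟩
  · intro φ₁ φ₂ h1 h2 S hSn hSpar
    have hSA : S.card ≤ Fintype.card A := Finset.card_le_univ S
    have hA : 0 < Fintype.card A := by omega
    obtain ⟨a0⟩ := Fintype.card_pos_iff.mp hA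
    obtain ⟨x, hx⟩ := Aux.exists_x S a0 hSn (by omega)
    have e1 : f x = φ₁ S := by rw [h1 x, key φ₁ x, hx]
    have e2 : f x = φ₂ S := by rw [h2 x, key φ₂ x, hx]
    exact e1.symm.trans e2
end
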